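/- arXiv:1503.05014 — 9 statements merged into one kernel-verified Lean document; each statement's English description precedes it below -/
import Mathlib

section
/- Let (T,d,ρ) be a nonempty compact rooted real tree, set Γ = sup_{u ∈ T} d(u,ρ) and D = sup_{u,v ∈ T} d(u,v), and suppose u₀ ∈ T is the unique point attaining the total height, i.e. d(u₀,ρ) = Γ and d(w,ρ) < Γ for every w ≠ u₀. Then sup_{v ∈ T} d(u₀,v) = D, i.e. the diameter of T is attained at pairs whose first coordinate is the highest point u₀. -/
/-- A metric space `T` is a real tree if (a) for all `x y : T` there is a unique isometry
`f : [0, dist x y] → T` with `f 0 = x` and `f (dist x y) = y`, and (b) the range of every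
continuous injective map `q : [0,1] → T` coincides with the range of the isometric
parametrization of the geodesic between `q 0` and `q 1`. -/
def IsRealTree (T : Type*) [MetricSpace T] : Prop :=
  (∀ x y : T, ∃! f : Set.Icc (0 : ℝ) (dist x y) → T,
      Isometry f ∧ f ⟨0, le_refl 0, dist_nonneg⟩ = x ∧
        f ⟨dist x y, dist_nonneg, le_refl (dist x y)⟩ = y) ∧
  (∀ q : Set.Icc (0 : ℝ) 1 → T, Continuous q → Function.Injective q →
    ∀ f : Set.Icc (0 : ℝ)
        (dist (q ⟨0, le_refl 0, zero_le_one⟩) (q ⟨1, zero_le_one, le_refl 1⟩)) → T,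
      Isometry f →
      f ⟨0, le_refl 0, dist_nonneg⟩ = q ⟨0, le_refl 0, zero_le_one⟩ →
      f ⟨dist (q ⟨0, le_refl 0, zero_le_one⟩) (q ⟨1, zero_le_one, le_refl 1⟩),
          dist_nonneg, le_refl _⟩ = q ⟨1, zero_le_one, le_refl 1⟩ →
      Set.range q = Set.range f)

open Set

/-- Auxiliary distance computation along an isometric parametrization of a segment. -/
lemma isom_dist_aux {T : Type*} [MetricSpace T] {L : ℝ}
    (f : Set.Icc (0 : ℝ) L → T) (hf : Isometry f)
    (s t : ℝ) (hs : s ∈ Set.Icc (0:ℝ) L) (ht : t ∈ Set.Icc (0:ℝ) L) :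
    dist (f ⟨s, hs⟩) (f ⟨t, ht⟩) = |s - t| := by
  rw [hf.dist_eq, Subtype.dist_eq, Real.dist_eq]

/-- In a real tree, for any geodesic parametrization `f` of `[x,y]` and any point `c`,
there is a parameter `t` such that `m = f t` lies on the geodesics from `c` to both
`x` and `y`. -/
lemma branch_point {T : Type*} [MetricSpace T] (hT : IsRealTree T) (x y c : T)
    (f : Set.Icc (0 : ℝ) (dist x y) → T) (hf : Isometry f)
    (hf0 : f ⟨0, le_refl 0, dist_nonneg⟩ = x)
    (hf1 : f ⟨dist x y, dist_nonneg, le_refl (dist x y)⟩ = y) :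
    ∃ t, ∃ (h0 : 0 ≤ t) (h1 : t ≤ dist x y),
      dist x c = t + dist (f ⟨t, h0, h1⟩) c ∧
      dist y c = (dist x y - t) + dist (f ⟨t, h0, h1⟩) c := by
  obtain ⟨σ, ⟨hσ, hσ0, hσ1⟩, -⟩ := hT.1 x c
  have hL : (0:ℝ) ≤ dist x y := dist_nonneg
  have hK : (0:ℝ) ≤ dist x c := dist_nonneg
  -- the set of parameters where the two geodesics from x agree
  set S : Set ℝ := {s | ∃ h : 0 ≤ s ∧ s ≤ dist x y ∧ s ≤ dist x c,
      σ ⟨s, h.1, h.2.2⟩ = f ⟨s, h.1, h.2.1⟩} with hSdef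
  have h0S : (0:ℝ) ∈ S := ⟨⟨le_refl 0, hL, hK⟩, by rw [hσ0, hf0]⟩
  have hSne : S.Nonempty := ⟨0, h0S⟩
  have hSbdd : BddAbove S := ⟨dist x y, fun s hs => hs.1.2.1⟩
  have hs₀0 : 0 ≤ sSup S := le_csSup hSbdd h0S
  have hs₀L : sSup S ≤ dist x y := csSup_le hSne fun s hs => hs.1.2.1
  have hs₀K : sSup S ≤ dist x c := csSup_le hSne fun s hs => hs.1.2.2
  -- sSup S belongs to S
  have hs₀S : σ ⟨sSup S, hs₀0, hs₀K⟩ = f ⟨sSup S, hs₀0, hs₀L⟩ := by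
    have hd : dist (σ ⟨sSup S, hs₀0, hs₀K⟩) (f ⟨sSup S, hs₀0, hs₀L⟩) ≤ 0 := by
      apply le_of_forall_pos_le_add
      intro ε hε
      obtain ⟨s, hsS, hss⟩ := exists_lt_of_lt_csSup hSne (by linarith : sSup S - ε/4 < sSup S)
      obtain ⟨⟨hs0, hsL, hsK⟩, heq⟩ := hsS
      have hs_le : s ≤ sSup S := le_csSup hSbdd ⟨⟨hs0, hsL, hsK⟩, heq⟩
      have d1 : dist (σ ⟨sSup S, hs₀0, hs₀K⟩) (σ ⟨s, hs0, hsK⟩) = |sSup S - s| :=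
        isom_dist_aux σ hσ (sSup S) s ⟨hs₀0, hs₀K⟩ ⟨hs0, hsK⟩
      have d2 : dist (f ⟨s, hs0, hsL⟩) (f ⟨sSup S, hs₀0, hs₀L⟩) = |s - sSup S| :=
        isom_dist_aux f hf s (sSup S) ⟨hs0, hsL⟩ ⟨hs₀0, hs₀L⟩
      have tri2 : dist (σ ⟨s, hs0, hsK⟩) (f ⟨sSup S, hs₀0, hs₀L⟩)
          = dist (f ⟨s, hs0, hsL⟩) (f ⟨sSup S, hs₀0, hs₀L⟩) := by rw [heq]
      have habs1 : |sSup S - s| = sSup S - s := abs_of_nonneg (by linarith)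
      have habs2 : |s - sSup S| = sSup S - s := by
        rw [abs_sub_comm]; exact abs_of_nonneg (by linarith)
      calc dist (σ ⟨sSup S, hs₀0, hs₀K⟩) (f ⟨sSup S, hs₀0, hs₀L⟩)
          ≤ dist (σ ⟨sSup S, hs₀0, hs₀K⟩) (σ ⟨s, hs0, hsK⟩)
            + dist (σ ⟨s, hs0, hsK⟩) (f ⟨sSup S, hs₀0, hs₀L⟩) := dist_triangle _ _ _
        _ = (sSup S - s) + (sSup S - s) := by rw [d1, tri2, d2, habs1, habs2]
        _ ≤ 0 + ε := by linarith
    exact eq_of_dist_eq_zero (le_antisymm hd dist_nonneg)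
  -- the distance from m to c and from m to y
  have dmc : dist (σ ⟨sSup S, hs₀0, hs₀K⟩) c = dist x c - sSup S := by
    have h := isom_dist_aux σ hσ (sSup S) (dist x c) ⟨hs₀0, hs₀K⟩ ⟨dist_nonneg, le_refl _⟩
    rw [hσ1, abs_of_nonpos (by linarith)] at h
    linarith [h]
  have dmy : dist (f ⟨sSup S, hs₀0, hs₀L⟩) y = dist x y - sSup S := by
    have h := isom_dist_aux f hf (sSup S) (dist x y) ⟨hs₀0, hs₀L⟩ ⟨dist_nonneg, le_refl _⟩
    rw [hf1, abs_of_nonpos (by linarith)] at h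
    linarith [h]
  have dmc' : dist (f ⟨sSup S, hs₀0, hs₀L⟩) c = dist x c - sSup S := by
    rw [← hs₀S]; exact dmc
  refine ⟨sSup S, hs₀0, hs₀L, by rw [dmc']; ring, ?_⟩
  -- dist y c = (dist x y - sSup S) + dist m c : the hard part
  rcases eq_or_lt_of_le hs₀K with hK' | hK'
  · -- sSup S = dist x c : m = c
    have hmc : f ⟨sSup S, hs₀0, hs₀L⟩ = c := by
      rw [← hs₀S]
      exact (congrArg σ (Subtype.ext hK')).trans hσ1
    rw [hmc, dist_self, dist_comm y c, ← hmc, dmy]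
    ring
  rcases eq_or_lt_of_le hs₀L with hL' | hL'
  · -- sSup S = dist x y : m = y
    have hmy : f ⟨sSup S, hs₀0, hs₀L⟩ = y :=
      (congrArg f (Subtype.ext hL')).trans hf1
    rw [hmy, ← hL', dist_comm y c]
    ring
  -- main case : sSup S < dist x c and sSup S < dist x y
  -- build an injective path from c to y by concatenating σ reversed with f
  set Q : ℝ → T := fun u =>
    if u ≤ dist x c - sSup S then σ (projIcc 0 (dist x c) hK (dist x c - u))
    else f (projIcc 0 (dist x y) hL (u - (dist x c - sSup S) + sSup S)) with hQdef
  have hM : (0:ℝ) < dist x c + dist x y - 2 * sSup S := by linarith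
  set q : Set.Icc (0:ℝ) 1 → T :=
    fun r => Q (r.1 * (dist x c + dist x y - 2 * sSup S)) with hqdef
  -- continuity of Q
  have hQcont : Continuous Q := by
    rw [hQdef]
    apply Continuous.if_le
    · exact hσ.continuous.comp (continuous_projIcc.comp
        (continuous_const.sub continuous_id))
    · exact hf.continuous.comp (continuous_projIcc.comp
        ((continuous_id.sub continuous_const).add continuous_const))
    · exact continuous_id
    · exact continuous_const
    · intro u hu
      subst hu
      have e1 : dist x c - (dist x c - sSup S) = sSup S := by ring
      have e2 : dist x c - sSup S - (dist x c - sSup S) + sSup S = sSup S := by ring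
      rw [e1, e2, projIcc_of_mem hK ⟨hs₀0, hs₀K⟩, projIcc_of_mem hL ⟨hs₀0, hs₀L⟩]
      exact hs₀S
  have hqcont : Continuous q := by
    rw [hqdef]
    exact hQcont.comp (continuous_subtype_val.mul continuous_const)
  -- value computations
  have hQfirst : ∀ u, u ≤ dist x c - sSup S →
      ∀ (h1 : 0 ≤ dist x c - u) (h2 : dist x c - u ≤ dist x c),
      Q u = σ ⟨dist x c - u, h1, h2⟩ := by
    intro u hua h1 h2
    rw [hQdef]
    simp only
    rw [if_pos hua, projIcc_of_mem hK ⟨h1, h2⟩]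
  have hQsecond : ∀ u, ¬ (u ≤ dist x c - sSup S) →
      ∀ (h1 : 0 ≤ u - (dist x c - sSup S) + sSup S)
        (h2 : u - (dist x c - sSup S) + sSup S ≤ dist x y),
      Q u = f ⟨u - (dist x c - sSup S) + sSup S, h1, h2⟩ := by
    intro u hua h1 h2
    rw [hQdef]
    simp only
    rw [if_neg hua, projIcc_of_mem hL ⟨h1, h2⟩]
  -- injectivity of q
  have hmixed : ∀ u₁ u₂ : ℝ, 0 ≤ u₁ → u₁ ≤ dist x c - sSup S →
      ¬ (u₂ ≤ dist x c - sSup S) → u₂ ≤ dist x c + dist x y - 2 * sSup S →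
      Q u₁ ≠ Q u₂ := by
    intro u₁ u₂ hu10 hu1a hau2 hu2M hQeq
    push_neg at hau2
    have ht₂0 : (0:ℝ) ≤ u₂ - (dist x c - sSup S) + sSup S := by linarith
    have ht₂L : u₂ - (dist x c - sSup S) + sSup S ≤ dist x y := by linarith
    rw [hQfirst u₁ hu1a (by linarith) (by linarith),
      hQsecond u₂ (by linarith) ht₂0 ht₂L] at hQeq
    -- compute dist x of both sides
    have e1 := isom_dist_aux σ hσ 0 (dist x c - u₁) ⟨le_refl 0, dist_nonneg⟩
      ⟨by linarith, by linarith⟩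
    rw [hσ0, abs_of_nonpos (by linarith)] at e1
    have e2 := isom_dist_aux f hf 0 (u₂ - (dist x c - sSup S) + sSup S)
      ⟨le_refl 0, dist_nonneg⟩ ⟨ht₂0, ht₂L⟩
    rw [hf0, abs_of_nonpos (by linarith)] at e2
    rw [hQeq] at e1
    have hKu : dist x c - u₁ = u₂ - (dist x c - sSup S) + sSup S := by
      have := e1.symm.trans e2
      linarith [this]
    have ht₂K : u₂ - (dist x c - sSup S) + sSup S ≤ dist x c := by linarith
    have ht₂S : u₂ - (dist x c - sSup S) + sSup S ∈ S := by
      refine ⟨⟨ht₂0, ht₂L, ht₂K⟩, ?_⟩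
      have hmk : (⟨dist x c - u₁, by linarith, by linarith⟩ : Set.Icc (0:ℝ) (dist x c))
          = ⟨u₂ - (dist x c - sSup S) + sSup S, ht₂0, ht₂K⟩ := Subtype.ext hKu
      rw [← hmk, hQeq]
    have : u₂ - (dist x c - sSup S) + sSup S ≤ sSup S := le_csSup hSbdd ht₂S
    linarith
  have hqinj : Function.Injective q := by
    intro r₁ r₂ hr
    rw [hqdef] at hr
    simp only at hr
    have hu1 : (0:ℝ) ≤ r₁.1 * (dist x c + dist x y - 2 * sSup S) :=
      mul_nonneg r₁.2.1 hM.le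
    have hu2 : (0:ℝ) ≤ r₂.1 * (dist x c + dist x y - 2 * sSup S) :=
      mul_nonneg r₂.2.1 hM.le
    have hu1M : r₁.1 * (dist x c + dist x y - 2 * sSup S)
        ≤ dist x c + dist x y - 2 * sSup S := by nlinarith [r₁.2.2]
    have hu2M : r₂.1 * (dist x c + dist x y - 2 * sSup S)
        ≤ dist x c + dist x y - 2 * sSup S := by nlinarith [r₂.2.2]
    have key : r₁.1 * (dist x c + dist x y - 2 * sSup S)
        = r₂.1 * (dist x c + dist x y - 2 * sSup S) := by
      by_cases h1 : r₁.1 * (dist x c + dist x y - 2 * sSup S) ≤ dist x c - sSup S <;>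
        by_cases h2 : r₂.1 * (dist x c + dist x y - 2 * sSup S) ≤ dist x c - sSup S
      · rw [hQfirst _ h1 (by linarith) (by linarith),
          hQfirst _ h2 (by linarith) (by linarith)] at hr
        have := Subtype.mk_eq_mk.mp (hσ.injective hr)
        linarith
      · exact absurd hr (hmixed _ _ hu1 h1 h2 hu2M)
      · exact absurd hr.symm (hmixed _ _ hu2 h2 h1 hu1M)
      · push_neg at h1 h2
        rw [hQsecond _ (by linarith) (by linarith) (by linarith),
          hQsecond _ (by linarith) (by linarith) (by linarith)] at hr
        have := Subtype.mk_eq_mk.mp (hf.injective hr)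
        linarith
    exact Subtype.ext (mul_right_cancel₀ hM.ne' key)
  -- endpoints of q
  have hq0 : q ⟨0, le_refl 0, zero_le_one⟩ = c := by
    rw [hqdef]
    simp only
    rw [zero_mul, hQfirst 0 (by linarith) (by linarith) (by linarith)]
    have hmk : (⟨dist x c - 0, by linarith, by linarith⟩ : Set.Icc (0:ℝ) (dist x c))
        = ⟨dist x c, dist_nonneg, le_refl (dist x c)⟩ := Subtype.ext (by ring)
    rw [hmk, hσ1]
  have hq1 : q ⟨1, zero_le_one, le_refl 1⟩ = y := by
    rw [hqdef]
    simp only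
    rw [one_mul, hQsecond _ (by linarith) (by linarith) (by linarith)]
    have hmk : (⟨dist x c + dist x y - 2 * sSup S - (dist x c - sSup S) + sSup S,
          by linarith, by linarith⟩ : Set.Icc (0:ℝ) (dist x y))
        = ⟨dist x y, dist_nonneg, le_refl (dist x y)⟩ := Subtype.ext (by ring)
    rw [hmk, hf1]
  -- m is in the range of q
  have hmq : f ⟨sSup S, hs₀0, hs₀L⟩ ∈ Set.range q := by
    refine ⟨⟨(dist x c - sSup S) / (dist x c + dist x y - 2 * sSup S),
      div_nonneg (by linarith) hM.le, by rw [div_le_one hM]; linarith⟩, ?_⟩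
    rw [hqdef]
    simp only
    rw [div_mul_cancel₀ _ hM.ne',
      hQfirst _ (le_refl _) (by linarith) (by linarith)]
    have hmk : (⟨dist x c - (dist x c - sSup S), by linarith, by linarith⟩ :
        Set.Icc (0:ℝ) (dist x c)) = ⟨sSup S, hs₀0, hs₀K⟩ := Subtype.ext (by ring)
    rw [hmk]
    exact hs₀S
  -- apply both tree axioms to the path q
  obtain ⟨g, ⟨hg, hg0, hg1⟩, -⟩ := hT.1 (q ⟨0, le_refl 0, zero_le_one⟩)
    (q ⟨1, zero_le_one, le_refl 1⟩)
  have hrange := hT.2 q hqcont hqinj g hg hg0 hg1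
  rw [hrange] at hmq
  obtain ⟨⟨rv, hrp⟩, hr⟩ := hmq
  have hb1 : (0:ℝ) ≤ rv := hrp.1
  have hb2 : rv ≤ dist (q ⟨0, le_refl 0, zero_le_one⟩) (q ⟨1, zero_le_one, le_refl 1⟩) :=
    hrp.2
  have e1 := isom_dist_aux g hg 0 rv ⟨le_refl 0, dist_nonneg⟩ hrp
  rw [hg0, hr, abs_of_nonpos (by linarith)] at e1
  have e2 := isom_dist_aux g hg rv
    (dist (q ⟨0, le_refl 0, zero_le_one⟩) (q ⟨1, zero_le_one, le_refl 1⟩)) hrp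
    ⟨dist_nonneg, le_refl _⟩
  rw [hg1, hr, abs_of_nonpos (by linarith)] at e2
  rw [hq0] at e1
  rw [hq0, hq1] at e2
  rw [hq0, hq1] at hb2
  -- e1 : dist c m = rv (up to sign), e2 : dist m y = dist c y - rv (up to sign)
  have hc1 : dist y c = dist c y := dist_comm y c
  have hc2 : dist (f ⟨sSup S, hs₀0, hs₀L⟩) c = dist c (f ⟨sSup S, hs₀0, hs₀L⟩) :=
    dist_comm _ _
  linarith [e1, e2, dmy, hc1, hc2]

/-- If `u₀` is the unique point of a nonempty compact rooted real tree attaining the total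
height `Γ = ⨆ u, dist u ρ`, then the diameter `D = ⨆ (u,v), dist u v` is attained at pairs
whose first coordinate is `u₀`: `⨆ v, dist u₀ v = D`. -/
theorem diameter_attained_at_highest_point {T : Type*} [MetricSpace T] [CompactSpace T]
    [Nonempty T] (hT : IsRealTree T) (ρ u₀ : T)
    (hmax : dist u₀ ρ = ⨆ u : T, dist u ρ)
    (huniq : ∀ w : T, w ≠ u₀ → dist w ρ < ⨆ u : T, dist u ρ) :
    (⨆ v : T, dist u₀ v) = ⨆ p : T × T, dist p.1 p.2 := by
  have hbd1 : BddAbove (Set.range fun u : T => dist u ρ) :=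
    (isCompact_range (continuous_id.dist continuous_const)).bddAbove
  have hbd2 : BddAbove (Set.range fun v : T => dist u₀ v) :=
    (isCompact_range (continuous_const.dist continuous_id)).bddAbove
  have hbd3 : BddAbove (Set.range fun p : T × T => dist p.1 p.2) :=
    (isCompact_range (continuous_fst.dist continuous_snd)).bddAbove
  have key : ∀ x y : T, dist x y ≤ ⨆ v : T, dist u₀ v := by
    intro x y
    obtain ⟨f, ⟨hf, hf0, hf1⟩, -⟩ := hT.1 x y
    obtain ⟨t, ht0, htL, hxρ, hyρ⟩ := branch_point hT x y ρ f hf hf0 hf1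
    obtain ⟨s, hs0, hsL, hxu, hyu⟩ := branch_point hT x y u₀ f hf hf0 hf1
    have hmn : dist (f ⟨s, hs0, hsL⟩) (f ⟨t, ht0, htL⟩) = |s - t| :=
      isom_dist_aux f hf s t ⟨hs0, hsL⟩ ⟨ht0, htL⟩
    have hΓx : dist x ρ ≤ dist u₀ ρ := by rw [hmax]; exact le_ciSup hbd1 x
    have hΓy : dist y ρ ≤ dist u₀ ρ := by rw [hmax]; exact le_ciSup hbd1 y
    have htri : dist u₀ ρ ≤ dist u₀ (f ⟨s, hs0, hsL⟩)
        + dist (f ⟨s, hs0, hsL⟩) (f ⟨t, ht0, htL⟩) + dist (f ⟨t, ht0, htL⟩) ρ :=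
      dist_triangle4 u₀ (f ⟨s, hs0, hsL⟩) (f ⟨t, ht0, htL⟩) ρ
    have hc1 : dist u₀ (f ⟨s, hs0, hsL⟩) = dist (f ⟨s, hs0, hsL⟩) u₀ := dist_comm _ _
    rcases le_total s t with hst | hst
    · have habs : |s - t| = t - s := by
        rw [abs_sub_comm]; exact abs_of_nonneg (by linarith)
      rw [hmn, habs] at htri
      have h2 : dist x y ≤ dist u₀ y := by
        rw [dist_comm u₀ y, hyu]
        linarith
      exact h2.trans (le_ciSup hbd2 y)
    · have habs : |s - t| = s - t := abs_of_nonneg (by linarith)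
      rw [hmn, habs] at htri
      have h2 : dist x y ≤ dist u₀ x := by
        rw [dist_comm u₀ x, hxu]
        linarith
      exact h2.trans (le_ciSup hbd2 x)
  apply le_antisymm
  · exact ciSup_le fun v => le_ciSup hbd3 (u₀, v)
  · exact ciSup_le fun p => key p.1 p.2
end

section
/- Let e : ℝ₊ → ℝ₊ be continuous with compact support, e(0) = 0, and e not identically zero, and let ζ = sup{t ≥ 0 : e(t) > 0}. For s, t ∈ [0,ζ] set b(s,t) = inf_{r ∈ [s∧t, s∨t]} e(r) and d(s,t) = e(s) + e(t) − 2 b(s,t). Then d is a pseudo-distance on [0,ζ]: d is nonnegative, d(t,t) = 0, d is symmetric, and d satisfies the triangle inequality d(s,u) ≤ d(s,t) + d(t,u) for all s,t,u ∈ [0,ζ]. -/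
/-- Let `e : ℝ₊ → ℝ₊` (modelled as `e : ℝ → ℝ`, nonnegative, vanishing on `(-∞,0]`)
be continuous with compact support, `e 0 = 0`, not identically zero, and let
`ζ = sup {t : e t > 0}`. With `b s t = inf_{r ∈ [s∧t, s∨t]} e r` and
`d s t = e s + e t - 2 b s t`, the function `d` is a pseudo-distance on `[0,ζ]`:
nonnegative, vanishing on the diagonal, symmetric, and satisfying the triangle
inequality. -/
theorem codingPseudoDistance (e : ℝ → ℝ) (hcont : Continuous e)
    (hsupp : HasCompactSupport e) (hpos : ∀ t, 0 ≤ e t) (h0 : e 0 = 0)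
    (hneg : ∀ t ≤ (0 : ℝ), e t = 0) (hne : ∃ t, e t ≠ 0) :
    let ζ : ℝ := sSup {t : ℝ | 0 < e t}
    let b : ℝ → ℝ → ℝ := fun s t => sInf (e '' Set.uIcc s t)
    let d : ℝ → ℝ → ℝ := fun s t => e s + e t - 2 * b s t
    ∀ s ∈ Set.Icc (0 : ℝ) ζ, ∀ t ∈ Set.Icc (0 : ℝ) ζ, ∀ u ∈ Set.Icc (0 : ℝ) ζ,
      0 ≤ d s t ∧ d t t = 0 ∧ d s t = d t s ∧ d s u ≤ d s t + d t u := by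
  intro ζ b d s hs t ht u hu
  have hbdd : ∀ x y : ℝ, BddBelow (e '' Set.uIcc x y) := by
    intro x y
    exact ⟨0, by rintro _ ⟨r, -, rfl⟩; exact hpos r⟩
  have hble : ∀ x y : ℝ, b x y ≤ e x := fun x y =>
    csInf_le (hbdd x y) ⟨x, Set.left_mem_uIcc, rfl⟩
  have hbler : ∀ x y : ℝ, b x y ≤ e y := fun x y =>
    csInf_le (hbdd x y) ⟨y, Set.right_mem_uIcc, rfl⟩
  have hsymm : ∀ x y : ℝ, b x y = b y x := by
    intro x y; simp only [b, Set.uIcc_comm]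
  have hself : ∀ x : ℝ, b x x = e x := by
    intro x; simp [b, Set.uIcc_self]
  have hmin : min (b s t) (b t u) ≤ b s u := by
    apply le_csInf
    · exact ⟨e s, s, Set.left_mem_uIcc, rfl⟩
    · rintro _ ⟨r, hr, rfl⟩
      rcases Set.uIcc_subset_uIcc_union_uIcc hr with h | h
      · exact le_trans (min_le_left _ _) (csInf_le (hbdd s t) ⟨r, h, rfl⟩)
      · exact le_trans (min_le_right _ _) (csInf_le (hbdd t u) ⟨r, h, rfl⟩)
  refine ⟨?_, ?_, ?_, ?_⟩
  · have h1 := hble s t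
    have h2 := hbler s t
    simp only [d]; linarith
  · simp only [d, hself]; ring
  · simp only [d, hsymm s t]; ring
  · have h1 := hbler s t
    have h2 := hble t u
    simp only [d]
    rcases le_total (b s t) (b t u) with h | h
    · have := min_eq_left h ▸ hmin; linarith
    · have := min_eq_right h ▸ hmin; linarith
end

section
/- For all a > 0 and all λ ≥ 0, the integral over (0,∞) of e^{−λx} · (a/(2√π)) x^{−3/2} e^{−a²/(4x)} dx equals e^{−a√λ}. -/
open Real MeasureTheory Set

/-- derivative of `t ↦ c/t`. -/
lemma hasDerivAt_c_div (c t : ℝ) (ht : t ≠ 0) :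
    HasDerivAt (fun t : ℝ => c / t) (-(c / t ^ 2)) t := by
  have h := (hasDerivAt_inv ht).const_mul c
  have h2 : c * -((t : ℝ) ^ 2)⁻¹ = -(c / t ^ 2) := by ring
  rw [h2] at h
  simpa only [← div_eq_mul_inv] using h

lemma glasser_integrable (c : ℝ) :
    IntegrableOn (fun t : ℝ => Real.exp (-(t - c / t) ^ 2)) (Ioi 0) := by
  have hcont : ContinuousOn (fun t : ℝ => Real.exp (-(t - c / t) ^ 2)) (Ioi 0) := by
    apply Real.continuous_exp.comp_continuousOn
    exact ((continuousOn_id.sub (continuousOn_const.div continuousOn_id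
      (fun x hx => ne_of_gt hx))).pow 2).neg
  apply Integrable.mono' (((integrable_exp_neg_mul_sq one_pos).const_mul
    (Real.exp (2 * c))).integrableOn (s := Ioi 0))
  · exact hcont.aestronglyMeasurable measurableSet_Ioi
  · filter_upwards [ae_restrict_mem measurableSet_Ioi] with t ht
    rw [Real.norm_eq_abs, abs_of_pos (Real.exp_pos _), ← Real.exp_add]
    apply Real.exp_le_exp.2
    have htc : t * (c / t) = c := mul_div_cancel₀ c (ne_of_gt ht)
    nlinarith [sq_nonneg (c / t), sq_nonneg t]

/-- Glasser-type integral: `∫ t in (0,∞), e^{-(t - c/t)²} dt = √π / 2` for `c ≥ 0`. -/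
lemma glasser (c : ℝ) (hc : 0 ≤ c) :
    ∫ t in Ioi (0 : ℝ), Real.exp (-(t - c / t) ^ 2) = Real.sqrt Real.pi / 2 := by
  rcases eq_or_lt_of_le hc with hc0 | hc0
  · simp only [← hc0, zero_div, sub_zero]
    simpa using integral_gaussian_Ioi 1
  set g : ℝ → ℝ := fun t => Real.exp (-(t - c / t) ^ 2) with hg
  -- substitution u = c / t
  have himg1 : (fun t : ℝ => c / t) '' Ioi 0 = Ioi 0 := by
    ext x
    constructor
    · rintro ⟨t, ht, rfl⟩
      exact div_pos hc0 ht
    · intro hx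
      exact ⟨c / x, div_pos hc0 hx, div_div_cancel₀ (ne_of_gt hc0)⟩
  have hderiv1 : ∀ t ∈ Ioi (0:ℝ), HasDerivWithinAt (fun t : ℝ => c / t) (-(c / t ^ 2)) (Ioi 0) t :=
    fun t ht => (hasDerivAt_c_div c t (ne_of_gt ht)).hasDerivWithinAt
  have hinj1 : InjOn (fun t : ℝ => c / t) (Ioi 0) := by
    have : StrictAntiOn (fun t : ℝ => c / t) (Ioi 0) :=
      fun x hx y _ hxy => div_lt_div_of_pos_left hc0 hx hxy
    exact this.injOn
  have keyeq : ∀ t ∈ Ioi (0:ℝ), |(-(c / t ^ 2))| • g (c / t) = (c / t ^ 2) * g t := by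
    intro t ht
    have h1 : |(-(c / t ^ 2))| = c / t ^ 2 := by
      rw [abs_neg, abs_of_pos (div_pos hc0 (pow_pos ht 2))]
    have h2 : g (c / t) = g t := by
      simp only [hg]
      rw [div_div_cancel₀ (ne_of_gt hc0), ← neg_sub t (c / t), neg_sq]
    rw [h1, h2, smul_eq_mul]
  have hB : ∫ u in Ioi (0:ℝ), g u = ∫ t in Ioi (0:ℝ), (c / t ^ 2) * g t := by
    have := integral_image_eq_integral_abs_deriv_smul measurableSet_Ioi hderiv1 hinj1 g
    rw [himg1] at this
    rw [this]
    exact setIntegral_congr_fun measurableSet_Ioi keyeq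
  have hInt1 : IntegrableOn g (Ioi 0) := glasser_integrable c
  have hInt2 : IntegrableOn (fun t : ℝ => (c / t ^ 2) * g t) (Ioi 0) := by
    have h := (integrableOn_image_iff_integrableOn_abs_deriv_smul measurableSet_Ioi
      hderiv1 hinj1 g)
    rw [himg1] at h
    exact (h.1 hInt1).congr_fun keyeq measurableSet_Ioi
  -- substitution s = t - c / t
  have himg2 : (fun t : ℝ => t - c / t) '' Ioi 0 = univ := by
    apply eq_univ_of_forall
    intro s
    have hd : Real.sqrt (s ^ 2 + 4 * c) ^ 2 = s ^ 2 + 4 * c := by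
      apply Real.sq_sqrt; nlinarith
    have hds : -s < Real.sqrt (s ^ 2 + 4 * c) := by
      nlinarith [Real.sqrt_nonneg (s ^ 2 + 4 * c), hd]
    have htpos : 0 < (s + Real.sqrt (s ^ 2 + 4 * c)) / 2 := by linarith
    refine ⟨(s + Real.sqrt (s ^ 2 + 4 * c)) / 2, htpos, ?_⟩
    have hne : (s + Real.sqrt (s ^ 2 + 4 * c)) / 2 ≠ 0 := ne_of_gt htpos
    have h4 : c / ((s + Real.sqrt (s ^ 2 + 4 * c)) / 2)
        = (Real.sqrt (s ^ 2 + 4 * c) - s) / 2 := by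
      rw [div_eq_iff hne]
      nlinarith [hd]
    simp only
    rw [h4]
    ring
  have hderiv2 : ∀ t ∈ Ioi (0:ℝ),
      HasDerivWithinAt (fun t : ℝ => t - c / t) (1 + c / t ^ 2) (Ioi 0) t := by
    intro t ht
    have h := (hasDerivAt_id t).sub (hasDerivAt_c_div c t (ne_of_gt ht))
    have h2 : (1 : ℝ) - -(c / t ^ 2) = 1 + c / t ^ 2 := by ring
    rw [h2] at h
    exact h.hasDerivWithinAt
  have hinj2 : InjOn (fun t : ℝ => t - c / t) (Ioi 0) := by
    have : StrictMonoOn (fun t : ℝ => t - c / t) (Ioi 0) := by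
      intro x hx y hy hxy
      have := div_lt_div_of_pos_left hc0 hx hxy
      simp only
      linarith
    exact this.injOn
  have h2 := integral_image_eq_integral_abs_deriv_smul measurableSet_Ioi hderiv2 hinj2
    (fun s => Real.exp (-s ^ 2))
  rw [himg2] at h2
  have hgauss : ∫ s in (univ : Set ℝ), Real.exp (-s ^ 2) = Real.sqrt Real.pi := by
    rw [setIntegral_univ]
    simpa using integral_gaussian 1
  rw [hgauss] at h2
  have h3 : ∫ t in Ioi (0:ℝ), |1 + c / t ^ 2| • Real.exp (-(t - c / t) ^ 2)
      = ∫ t in Ioi (0:ℝ), (g t + (c / t ^ 2) * g t) := by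
    apply setIntegral_congr_fun measurableSet_Ioi
    intro t ht
    have hpos : (0:ℝ) < 1 + c / t ^ 2 := by positivity
    simp only [smul_eq_mul, hg]
    rw [abs_of_pos hpos]
    ring
  rw [h3, integral_add hInt1 hInt2, ← hB] at h2
  linarith [h2]

/-- For `a > 0` and `λ ≥ 0`, the Laplace transform of
`f_a(x) = (a/(2√π)) x^{-3/2} e^{-a²/(4x)}` is `e^{-a√λ}`. -/
theorem laplace_fa (a l : ℝ) (ha : 0 < a) (hl : 0 ≤ l) :
    ∫ x in Set.Ioi (0 : ℝ),
      Real.exp (-l * x) *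
        (a / (2 * Real.sqrt Real.pi) * x ^ (-(3 : ℝ) / 2) * Real.exp (-a ^ 2 / (4 * x)))
      = Real.exp (-a * Real.sqrt l) := by
  set c : ℝ := a * Real.sqrt l / 2 with hcdef
  have hc : 0 ≤ c := by positivity
  set h : ℝ → ℝ := fun x => Real.exp (-l * x) *
      (a / (2 * Real.sqrt Real.pi) * x ^ (-(3 : ℝ) / 2) * Real.exp (-a ^ 2 / (4 * x))) with hh
  -- substitution x = a^2 / (4 t^2)
  set f : ℝ → ℝ := fun t => a ^ 2 / (4 * t ^ 2) with hf
  have hfpos : ∀ t : ℝ, 0 < t → 0 < f t := fun t ht => by simp only [hf]; positivity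
  have himg : f '' Ioi 0 = Ioi 0 := by
    ext x
    constructor
    · rintro ⟨t, ht, rfl⟩
      exact hfpos t ht
    · intro hx
      have hx' : (0:ℝ) < x := hx
      have hsp : 0 < Real.sqrt x := Real.sqrt_pos.2 hx'
      refine ⟨a / (2 * Real.sqrt x), mem_Ioi.2 (by positivity), ?_⟩
      have hsx : Real.sqrt x ^ 2 = x := Real.sq_sqrt hx'.le
      have hsxne : Real.sqrt x ≠ 0 := by positivity
      simp only [hf]
      field_simp
      nlinarith [hsx]
  have hderiv : ∀ t ∈ Ioi (0:ℝ),
      HasDerivWithinAt f (-(a ^ 2 / (2 * t ^ 3))) (Ioi 0) t := by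
    intro t ht
    have ht' : (0:ℝ) < t := ht
    have hu : HasDerivAt (fun t : ℝ => 4 * t ^ 2) (4 * (2 * t)) t := by
      simpa using (hasDerivAt_pow 2 t).const_mul 4
    have hne : 4 * t ^ 2 ≠ 0 := by positivity
    have h := (hasDerivAt_const t (a ^ 2)).div hu hne
    have : (0 * (4 * t ^ 2) - a ^ 2 * (4 * (2 * t))) / (4 * t ^ 2) ^ 2
        = -(a ^ 2 / (2 * t ^ 3)) := by
      field_simp; ring
    rw [this] at h
    exact h.hasDerivWithinAt
  have hinj : InjOn f (Ioi 0) := by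
    have : StrictAntiOn f (Ioi 0) := by
      intro x hx y hy hxy
      have hx' : (0:ℝ) < x := hx
      have hy' : (0:ℝ) < y := hy
      simp only [hf]
      apply div_lt_div_of_pos_left (by positivity) (by positivity)
      nlinarith
    exact this.injOn
  have key := integral_image_eq_integral_abs_deriv_smul measurableSet_Ioi hderiv hinj h
  rw [himg] at key
  rw [key]
  have hptwise : ∀ t ∈ Ioi (0:ℝ), |(-(a ^ 2 / (2 * t ^ 3)))| • h (f t)
      = (2 / Real.sqrt Real.pi * Real.exp (-(2 * c))) * Real.exp (-(t - c / t) ^ 2) := by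
    intro t ht
    have ht' : (0:ℝ) < t := ht
    have habs : |(-(a ^ 2 / (2 * t ^ 3)))| = a ^ 2 / (2 * t ^ 3) := by
      rw [abs_neg, abs_of_pos (by positivity)]
    -- rpow computation
    have hsqrtf : Real.sqrt (f t) = a / (2 * t) := by
      have : f t = (a / (2 * t)) ^ 2 := by simp only [hf]; field_simp; ring
      rw [this, Real.sqrt_sq (by positivity)]
    have hrpow : (f t) ^ (-(3 : ℝ) / 2) = (2 * t) ^ 3 / a ^ 3 := by
      have hft : (0:ℝ) < f t := hfpos t ht'
      rw [show (-(3 : ℝ) / 2) = (1 / 2) * ((-3 : ℤ) : ℝ) by norm_num,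
        Real.rpow_mul hft.le, ← Real.sqrt_eq_rpow, Real.rpow_intCast, hsqrtf]
      have hz : (a / (2 * t)) ^ (-3 : ℤ) = ((a / (2 * t)) ^ (3 : ℕ))⁻¹ := by
        rw [zpow_neg, show ((3:ℤ)) = ((3:ℕ):ℤ) from rfl, zpow_natCast]
      rw [hz, div_pow, inv_div]
    have hq : c ^ 2 = l * a ^ 2 / 4 := by
      rw [hcdef, div_pow, mul_pow, Real.sq_sqrt hl]
      ring
    have hexp1 : -l * f t = -((c / t) ^ 2) := by
      simp only [hf]
      rw [div_pow, hq]
      field_simp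
    have hexp2 : -a ^ 2 / (4 * f t) = -(t ^ 2) := by
      simp only [hf]
      field_simp
    rw [habs, smul_eq_mul]
    simp only [hh]
    rw [hrpow, hexp1, hexp2]
    have hcomb : Real.exp (-((c / t) ^ 2)) * Real.exp (-(t ^ 2))
        = Real.exp (-(2 * c)) * Real.exp (-(t - c / t) ^ 2) := by
      rw [← Real.exp_add, ← Real.exp_add]
      congr 1
      have htc : t * (c / t) = c := mul_div_cancel₀ c (ne_of_gt ht')
      have hexpand : (t - c / t) ^ 2 = t ^ 2 - 2 * c + (c / t) ^ 2 := by
        rw [sub_sq, mul_assoc, htc]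
      rw [hexpand]
      ring
    have hpi : Real.sqrt Real.pi ≠ 0 := by positivity
    rw [mul_assoc (2 / Real.sqrt Real.pi), ← hcomb]
    field_simp
  rw [setIntegral_congr_fun measurableSet_Ioi hptwise, MeasureTheory.integral_const_mul,
    glasser c hc]
  have hpi : Real.sqrt Real.pi ≠ 0 := by positivity
  rw [show -a * Real.sqrt l = -(2 * c) by rw [hcdef]; ring]
  field_simp
end

section
/- For all a > 0 and all λ > 0, the integral over (0,∞) of e^{−λx} · (1/(8√π)) x^{−7/2} e^{−a²/(4x)} (a³ − 6ax) dx equals λ e^{−a√λ}. -/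
/-!
Since `g_a = f_a'`, integrating by parts against `e^{-λx}` (the boundary terms vanish because
`f_a → 0` at `0⁺` and at `∞`) gives `𝓛_λ(g_a) = λ 𝓛_λ(f_a)`, so it suffices that
`𝓛_λ(f_a) = e^{-a√λ}`. This is the classical integral `I_s = ∫₀^∞ x^s e^{-b²x - d²/x} dx` at
`s = -3/2`, with `b = √λ`, `d = a/2`: the substitution `u = b√x - d/√x` turns
`∫ e^{-u²} du = √π` into `b I_{-1/2} + d I_{-3/2} = 2√π e^{-2bd}`, and the involution
`x ↦ d²/(b²x)` shows `d I_{-3/2} = b I_{-1/2}`.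
-/

open MeasureTheory Real Set Filter Topology
open scoped Nat

lemma rpow_mul_exp_neg_le {k u : ℝ} (hk : 0 ≤ k) (hu : 0 ≤ u) :
    u ^ k * exp (-u) ≤ ⌈k⌉₊ ! + 1 := by
  set n := ⌈k⌉₊
  have hpow : u ^ k ≤ u ^ n + 1 := by
    rcases le_total u 1 with h | h
    · linarith [rpow_le_one hu h hk, pow_nonneg hu n]
    · have := rpow_le_rpow_of_exponent_le h (Nat.le_ceil k)
      rw [rpow_natCast] at this
      linarith
  have hfact : u ^ n ≤ n ! * exp u := by
    rw [← div_le_iff₀' (by positivity)]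
    exact pow_div_factorial_le_exp u hu n
  rw [exp_neg, ← div_eq_mul_inv, div_le_iff₀ (exp_pos u)]
  linarith [one_le_exp hu]

lemma rpow_mul_exp_neg_div_le {s c x : ℝ} (hs : s ≤ 0) (hc : 0 < c) (hx : 0 < x) :
    x ^ s * exp (-c / x) ≤ (⌈-s⌉₊ ! + 1) * c ^ s := by
  have hu : 0 < c / x := div_pos hc hx
  have hxs : x ^ s = c ^ s * (c / x) ^ (-s) := by
    rw [rpow_neg hu.le, div_rpow hc.le hx.le]
    field_simp
  calc x ^ s * exp (-c / x) = c ^ s * ((c / x) ^ (-s) * exp (-(c / x))) := by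
        rw [hxs, neg_div]; ring
    _ ≤ c ^ s * (⌈-s⌉₊ ! + 1) :=
        mul_le_mul_of_nonneg_left (rpow_mul_exp_neg_le (by linarith) hu.le) (by positivity)
    _ = (⌈-s⌉₊ ! + 1) * c ^ s := mul_comm _ _

lemma integrableOn_exp_neg_mul_mul_rpow_mul_exp_neg_div {l s c : ℝ} (hl : 0 < l) (hs : s ≤ 0)
    (hc : 0 < c) : IntegrableOn (fun x ↦ exp (-l * x) * (x ^ s * exp (-c / x))) (Ioi 0) := by
  refine ((exp_neg_integrableOn_Ioi 0 hl).const_mul ((⌈-s⌉₊ ! + 1) * c ^ s)).mono'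
    (by fun_prop) ?_
  filter_upwards [ae_restrict_mem measurableSet_Ioi] with x (hx : 0 < x)
  rw [norm_of_nonneg (by positivity), mul_comm]
  exact mul_le_mul_of_nonneg_right (rpow_mul_exp_neg_div_le hs hc hx) (exp_pos _).le

lemma tendsto_rpow_mul_exp_neg_div_nhdsGT_zero (s : ℝ) {c : ℝ} (hc : 0 < c) :
    Tendsto (fun x ↦ x ^ s * exp (-c / x)) (𝓝[>] 0) (𝓝 0) := by
  refine ((tendsto_rpow_mul_exp_neg_mul_atTop_nhds_zero (-s) c hc).comp
    tendsto_inv_nhdsGT_zero).congr' ?_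
  filter_upwards [self_mem_nhdsWithin] with x (hx : 0 < x)
  simp [inv_rpow hx.le, rpow_neg hx.le, div_eq_mul_inv]

lemma rpow_neg_one_half {x : ℝ} (hx : 0 ≤ x) : x ^ (-(1 : ℝ) / 2) = (√x)⁻¹ := by
  rw [sqrt_eq_rpow, ← rpow_neg hx, neg_div]

lemma rpow_neg_three_half {x : ℝ} (hx : 0 < x) : x ^ (-(3 : ℝ) / 2) = (x * √x)⁻¹ := by
  rw [show -(3 : ℝ) / 2 = -(1 : ℝ) / 2 - 1 by norm_num, rpow_sub_one hx.ne',
    rpow_neg_one_half hx.le, div_eq_mul_inv, mul_inv, mul_comm]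

section
variable {b d : ℝ}

lemma hasDerivAt_mul_sqrt_sub_div_sqrt (b d : ℝ) {x : ℝ} (hx : 0 < x) :
    HasDerivAt (fun x ↦ b * √x - d / √x) (b / (2 * √x) + d / (2 * x * √x)) x := by
  have hs : 0 < √x := sqrt_pos.2 hx
  have hsqrt := hasDerivAt_sqrt hx.ne'
  simp only [div_eq_mul_inv d]
  refine ((hsqrt.const_mul b).sub ((hsqrt.inv hs.ne').const_mul d)).congr_deriv ?_
  field_simp
  rw [sq_sqrt hx.le]
  ring

lemma strictMonoOn_mul_sqrt_sub_div_sqrt (hb : 0 < b) (hd : 0 ≤ d) :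
    StrictMonoOn (fun x ↦ b * √x - d / √x) (Ioi 0) := by
  intro x (hx : 0 < x) y _ hxy
  have hsx : 0 < √x := sqrt_pos.2 hx
  have hsxy : √x < √y := sqrt_lt_sqrt hx.le hxy
  have : d / √y ≤ d / √x := div_le_div_of_nonneg_left hd hsx hsxy.le
  dsimp only
  nlinarith

lemma image_mul_sqrt_sub_div_sqrt (hb : 0 < b) (hd : 0 < d) :
    (fun x ↦ b * √x - d / √x) '' Ioi 0 = univ := by
  refine eq_univ_of_forall fun u ↦ ?_
  -- `√x = t` is the positive root of `b t² - u t - d = 0`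
  obtain ⟨r, hr, hdisc⟩ : ∃ r, |u| < r ∧ r ^ 2 = u ^ 2 + 4 * b * d :=
    ⟨√(u ^ 2 + 4 * b * d),
      by rw [← sqrt_sq_eq_abs]; exact sqrt_lt_sqrt (sq_nonneg u) (by nlinarith),
      sq_sqrt (by positivity)⟩
  set t := (u + r) / (2 * b)
  have ht : 0 < t := div_pos (by linarith [neg_abs_le u]) (by positivity)
  refine ⟨t ^ 2, pow_pos ht 2, ?_⟩
  have hroot : b * t ^ 2 = u * t + d := by
    simp only [t]; field_simp; nlinarith
  simp only [sqrt_sq ht.le]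
  field_simp
  linarith

-- The normalizing integral of the generalized inverse Gaussian distribution.
noncomputable def gigIntegral (b d s : ℝ) : ℝ :=
  ∫ x in Ioi 0, exp (-b ^ 2 * x) * (x ^ s * exp (-d ^ 2 / x))

lemma gigIntegral_neg_one_half_add_neg_three_half (hb : 0 < b) (hd : 0 < d) :
    b * gigIntegral b d (-1 / 2) + d * gigIntegral b d (-3 / 2) =
      2 * √π * exp (-(2 * b * d)) := by
  have hsubst := integral_image_eq_integral_abs_deriv_smul measurableSet_Ioi
    (fun x hx ↦ (hasDerivAt_mul_sqrt_sub_div_sqrt b d hx).hasDerivWithinAt)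
    (strictMonoOn_mul_sqrt_sub_div_sqrt hb hd.le).injOn (fun u ↦ exp (-u ^ 2))
  have hgauss : ∫ u, exp (-u ^ 2) = √π := by simpa using integral_gaussian 1
  rw [image_mul_sqrt_sub_div_sqrt hb hd, Measure.restrict_univ, hgauss] at hsubst
  have hpt : ∀ x ∈ Ioi (0 : ℝ),
      |b / (2 * √x) + d / (2 * x * √x)| • exp (-(b * √x - d / √x) ^ 2) =
        exp (2 * b * d) * (b / 2 * (exp (-b ^ 2 * x) * (x ^ (-(1 : ℝ) / 2) * exp (-d ^ 2 / x))) +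
          d / 2 * (exp (-b ^ 2 * x) * (x ^ (-(3 : ℝ) / 2) * exp (-d ^ 2 / x)))) := by
    intro x (hx : 0 < x)
    have hs : 0 < √x := sqrt_pos.2 hx
    have hsq : -(b * √x - d / √x) ^ 2 = 2 * b * d + -b ^ 2 * x + -d ^ 2 / x := by
      field_simp
      rw [sq_sqrt hx.le]
      ring
    rw [abs_of_pos (by positivity), smul_eq_mul, hsq, exp_add, exp_add, rpow_neg_one_half hx.le,
      rpow_neg_three_half hx]
    field_simp
  have hint (s : ℝ) (hs : s ≤ 0) :=
    integrableOn_exp_neg_mul_mul_rpow_mul_exp_neg_div (pow_pos hb 2) hs (pow_pos hd 2)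
  rw [setIntegral_congr_fun measurableSet_Ioi hpt, integral_const_mul,
    integral_add ((hint _ (by norm_num)).const_mul _) ((hint _ (by norm_num)).const_mul _),
    integral_const_mul, integral_const_mul, ← gigIntegral, ← gigIntegral] at hsubst
  rw [hsubst, exp_neg]
  field_simp

lemma gigIntegral_neg_three_half_eq (hb : 0 < b) (hd : 0 < d) :
    d * gigIntegral b d (-3 / 2) = b * gigIntegral b d (-1 / 2) := by
  set κ := (d / b) ^ 2 with hκdef
  have hκ : 0 < κ := by positivity
  have hsubst := integral_image_eq_integral_abs_deriv_smul measurableSet_Ioi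
    (fun x (hx : 0 < x) ↦ ((hasDerivAt_inv hx.ne').const_mul κ).hasDerivWithinAt)
    (fun x _ y _ h ↦ inv_injective (mul_left_cancel₀ hκ.ne' h))
    (fun x ↦ exp (-b ^ 2 * x) * (x ^ (-(3 : ℝ) / 2) * exp (-d ^ 2 / x)))
  have himage : (fun x ↦ κ * x⁻¹) '' Ioi 0 = Ioi 0 := by
    refine Subset.antisymm (image_subset_iff.2 fun x (hx : 0 < x) ↦ ?_)
      fun y (hy : 0 < y) ↦ ⟨κ * y⁻¹, ?_, ?_⟩
    · simp only [mem_preimage, mem_Ioi]; positivity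
    · simp only [mem_Ioi]; positivity
    · field_simp
  have hpt : ∀ x ∈ Ioi (0 : ℝ),
      |κ * -(x ^ 2)⁻¹| • (exp (-b ^ 2 * (κ * x⁻¹)) *
        ((κ * x⁻¹) ^ (-(3 : ℝ) / 2) * exp (-d ^ 2 / (κ * x⁻¹)))) =
        b / d * (exp (-b ^ 2 * x) * (x ^ (-(1 : ℝ) / 2) * exp (-d ^ 2 / x))) := by
    intro x (hx : 0 < x)
    have hs : 0 < √x := sqrt_pos.2 hx
    have hsqrt : √(κ * x⁻¹) = d / b * (√x)⁻¹ := by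
      rw [sqrt_mul hκ.le, sqrt_sq (by positivity), sqrt_inv]
    have hexp₁ : -b ^ 2 * (κ * x⁻¹) = -d ^ 2 / x := by rw [hκdef]; field_simp
    have hexp₂ : -d ^ 2 / (κ * x⁻¹) = -b ^ 2 * x := by rw [hκdef]; field_simp
    rw [abs_mul, abs_neg, abs_of_pos hκ, abs_of_pos (by positivity), smul_eq_mul, hexp₁, hexp₂,
      rpow_neg_three_half (by positivity), hsqrt, rpow_neg_one_half hx.le, hκdef]
    field_simp
    rw [sq_sqrt hx.le]
  rw [himage, setIntegral_congr_fun measurableSet_Ioi hpt, integral_const_mul, ← gigIntegral,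
    ← gigIntegral] at hsubst
  rw [hsubst]
  field_simp

lemma gigIntegral_neg_three_half (hb : 0 < b) (hd : 0 < d) :
    gigIntegral b d (-3 / 2) = √π / d * exp (-(2 * b * d)) := by
  have h₁ := gigIntegral_neg_one_half_add_neg_three_half hb hd
  have h₂ := gigIntegral_neg_three_half_eq hb hd
  rw [div_mul_eq_mul_div, eq_div_iff hd.ne']
  linarith

end

-- The functions `f_a` (a Lévy density) and `g_a` of the statement.
noncomputable def levyDensity (a x : ℝ) : ℝ :=
  a / (2 * √π) * x ^ (-(3 : ℝ) / 2) * exp (-a ^ 2 / (4 * x))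

noncomputable def levyDensityDeriv (a x : ℝ) : ℝ :=
  1 / (8 * √π) * x ^ (-(7 : ℝ) / 2) * exp (-a ^ 2 / (4 * x)) * (a ^ 3 - 6 * a * x)

section
variable {a l : ℝ}

lemma hasDerivAt_levyDensity (a : ℝ) {x : ℝ} (hx : 0 < x) :
    HasDerivAt (levyDensity a) (levyDensityDeriv a x) x := by
  have hpow : HasDerivAt (fun y ↦ y ^ (-(3 : ℝ) / 2))
      (-(3 : ℝ) / 2 * x ^ (-(3 : ℝ) / 2 - 1)) x :=
    hasDerivAt_rpow_const (Or.inl hx.ne')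
  have hexp : HasDerivAt (fun y ↦ -a ^ 2 / (4 * y)) (a ^ 2 / (4 * x ^ 2)) x := by
    refine ((hasDerivAt_const x (-a ^ 2)).div ((hasDerivAt_id' x).const_mul 4)
      (by positivity)).congr_deriv ?_
    field_simp
    ring
  refine ((hpow.const_mul (a / (2 * √π))).mul hexp.exp).congr_deriv ?_
  rw [show -(3 : ℝ) / 2 - 1 = -(7 : ℝ) / 2 + (1 : ℕ) by norm_num,
    show -(3 : ℝ) / 2 = -(7 : ℝ) / 2 + (2 : ℕ) by norm_num, rpow_add_natCast hx.ne',
    rpow_add_natCast hx.ne', levyDensityDeriv]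
  field_simp
  ring

lemma levyDensity_eq (a x : ℝ) :
    levyDensity a x = a / (2 * √π) * (x ^ (-(3 : ℝ) / 2) * exp (-(a / 2) ^ 2 / x)) := by
  rw [levyDensity, show -(a / 2) ^ 2 / x = -a ^ 2 / (4 * x) by ring, mul_assoc]

lemma integrableOn_exp_neg_mul_levyDensity (ha : a ≠ 0) (hl : 0 < l) :
    IntegrableOn (fun x ↦ exp (-l * x) * levyDensity a x) (Ioi 0) := by
  refine IntegrableOn.congr_fun ((integrableOn_exp_neg_mul_mul_rpow_mul_exp_neg_div hl
    (s := -(3 : ℝ) / 2) (by norm_num) (c := (a / 2) ^ 2) (by positivity)).const_mul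
    (a / (2 * √π))) (fun x _ ↦ ?_) measurableSet_Ioi
  rw [levyDensity_eq]
  ring

lemma integral_exp_neg_mul_levyDensity (ha : 0 < a) (hl : 0 < l) :
    ∫ x in Ioi 0, exp (-l * x) * levyDensity a x = exp (-a * √l) := by
  have hpt (x : ℝ) : exp (-l * x) * levyDensity a x =
      a / (2 * √π) * (exp (-√l ^ 2 * x) * (x ^ (-3 / 2 : ℝ) * exp (-(a / 2) ^ 2 / x))) := by
    rw [sq_sqrt hl.le, levyDensity_eq]
    ring
  simp_rw [hpt]
  rw [integral_const_mul, ← gigIntegral,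
    gigIntegral_neg_three_half (sqrt_pos.2 hl) (by positivity),
    show -(2 * √l * (a / 2)) = -a * √l by ring]
  field_simp

lemma integrableOn_exp_neg_mul_levyDensityDeriv (ha : a ≠ 0) (hl : 0 < l) :
    IntegrableOn (fun x ↦ exp (-l * x) * levyDensityDeriv a x) (Ioi 0) := by
  have hint (s : ℝ) (hs : s ≤ 0) :=
    integrableOn_exp_neg_mul_mul_rpow_mul_exp_neg_div hl hs (c := (a / 2) ^ 2) (by positivity)
  refine IntegrableOn.congr_fun (((hint (-(7 : ℝ) / 2) (by norm_num)).const_mul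
    (a ^ 3 / (8 * √π))).sub ((hint (-(5 : ℝ) / 2) (by norm_num)).const_mul (6 * a / (8 * √π))))
    (fun x (hx : 0 < x) ↦ ?_) measurableSet_Ioi
  rw [Pi.sub_apply, levyDensityDeriv, show -(a / 2) ^ 2 / x = -a ^ 2 / (4 * x) by ring,
    show -(5 : ℝ) / 2 = -(7 : ℝ) / 2 + (1 : ℕ) by norm_num, rpow_add_natCast hx.ne']
  ring

lemma tendsto_levyDensity_nhdsGT_zero (ha : a ≠ 0) :
    Tendsto (levyDensity a) (𝓝[>] 0) (𝓝 0) := by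
  have h := (tendsto_rpow_mul_exp_neg_div_nhdsGT_zero (-(3 : ℝ) / 2) (c := (a / 2) ^ 2)
    (by positivity)).const_mul (a / (2 * √π))
  rw [mul_zero] at h
  exact h.congr fun x ↦ (levyDensity_eq a x).symm

lemma tendsto_levyDensity_atTop (a : ℝ) : Tendsto (levyDensity a) atTop (𝓝 0) := by
  have hpow := tendsto_rpow_neg_atTop (y := 3 / 2) (by norm_num)
  have hexp : Tendsto (fun x ↦ exp (-a ^ 2 / (4 * x))) atTop (𝓝 1) := by
    have h := tendsto_const_nhds (x := -a ^ 2).div_atTop (tendsto_id.const_mul_atTop four_pos)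
    simpa [Function.comp_def] using (continuous_exp.tendsto 0).comp h
  have h := (hpow.const_mul (a / (2 * √π))).mul hexp
  rw [mul_zero, zero_mul] at h
  refine h.congr fun x ↦ ?_
  rw [levyDensity, neg_div (2 : ℝ) 3]

end

/-- For `a > 0` and `λ > 0`, the Laplace transform of
`g_a(x) = (1/(8√π)) x^{-7/2} e^{-a²/(4x)} (a³ - 6ax)` is `λ e^{-a√λ}`. -/
theorem laplace_ga (a l : ℝ) (ha : 0 < a) (hl : 0 < l) :
    ∫ x in Set.Ioi (0 : ℝ),
      Real.exp (-l * x) *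
        (1 / (8 * Real.sqrt Real.pi) * x ^ (-(7 : ℝ) / 2) * Real.exp (-a ^ 2 / (4 * x)) *
          (a ^ 3 - 6 * a * x))
      = l * Real.exp (-a * Real.sqrt l) := by
  have hu (x : ℝ) : HasDerivAt (fun x ↦ exp (-l * x)) (-l * exp (-l * x)) x := by
    simpa [mul_comm] using ((hasDerivAt_id x).const_mul (-l)).exp
  have hu₀ : Tendsto (fun x ↦ exp (-l * x)) (𝓝[>] 0) (𝓝 1) := by
    simpa using (hu 0).continuousAt.tendsto.mono_left nhdsWithin_le_nhds
  have hu_top : Tendsto (fun x ↦ exp (-l * x)) atTop (𝓝 0) :=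
    tendsto_exp_atBot.comp (tendsto_id.const_mul_atTop_of_neg (neg_lt_zero.2 hl))
  have hparts := integral_Ioi_mul_deriv_eq_deriv_mul (fun x _ ↦ hu x)
    (fun x hx ↦ hasDerivAt_levyDensity a hx)
    (integrableOn_exp_neg_mul_levyDensityDeriv ha.ne' hl)
    (by simpa only [Pi.mul_def, mul_assoc, IntegrableOn] using
      (integrableOn_exp_neg_mul_levyDensity ha.ne' hl).const_mul (-l))
    (by simpa [Pi.mul_def] using hu₀.mul (tendsto_levyDensity_nhdsGT_zero ha.ne'))
    (by simpa [Pi.mul_def] using hu_top.mul (tendsto_levyDensity_atTop a))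
  simp only [mul_assoc, integral_const_mul, integral_exp_neg_mul_levyDensity ha hl] at hparts
  exact hparts.trans (by ring)
end

section
/- For all a > 0 and all λ > 0, the integral over (0,∞) of e^{−λx} · (1/(8√π)) x^{−7/2} e^{−a²/(4x)} (a³ + 6ax) dx equals λ e^{−a√λ} + (6/a) √λ e^{−a√λ} + (6/a²) e^{−a√λ}. In particular, ∫₀^∞ e^{−λx} |g_a(x)| dx ≤ λ e^{−a√λ} + (6/a) √λ e^{−a√λ} + (6/a²) e^{−a√λ}, where g_a(x) = (1/(8√π)) x^{−7/2} e^{−a²/(4x)} (a³ − 6ax). -/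
/-!
Write `s = √λ` and `x = t²`. Completing the square, `Φ(y) = ∫₀^y e^{-τ²} dτ` evaluated at
`s t ∓ a/(2t)` has `t`-derivative `e^{±as} e^{-s²t²-a²/(4t²)} (s ± a/(2t²))`, so the integrand is,
in the variable `x`, the derivative of an explicit combination `G(√x)` of these two Gaussian
primitives and the elementary term `(6/(at) + a/(2t³)) e^{-s²t²-a²/(4t²)}`. As `t → 0⁺` and
`t → ∞` the arguments `s t ∓ a/(2t)` tend to `∓∞` resp. `+∞` and the elementary term vanishes, so
`G` has limits differing by `e^{-as}(s² + 6s/a + 6/a²)`. The integrand being nonnegative, the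
fundamental theorem of calculus on `(0, ∞)` gives integrability and the value; the bound for
`|g_a|` then follows from `|a³ - 6ax| ≤ a³ + 6ax`.
-/

open MeasureTheory Filter Set Real Topology

lemma integral_Ioi_of_hasDerivAt_of_nonneg_of_tendsto {f f' : ℝ → ℝ} {a m₀ m : ℝ}
    (hderiv : ∀ x ∈ Ioi a, HasDerivAt f (f' x) x) (hf' : ∀ x ∈ Ioi a, 0 ≤ f' x)
    (hf₀ : Tendsto f (𝓝[>] a) (𝓝 m₀)) (hf : Tendsto f atTop (𝓝 m)) :
    IntegrableOn f' (Ioi a) ∧ ∫ x in Ioi a, f' x = m - m₀ := by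
  set g := Function.update f a m₀
  have hcont : ContinuousWithinAt g (Ici a) a := by
    rw [← Ici_sdiff_left] at hf₀
    exact continuousWithinAt_update_same.mpr hf₀
  have hderiv' : ∀ x ∈ Ioi a, HasDerivAt g (f' x) x := fun x hx =>
    (hderiv x hx).congr_of_eventuallyEq <| by
      filter_upwards [eventually_ne_nhds (ne_of_gt hx)] with y hy
      exact Function.update_of_ne hy _ _
  have hg : Tendsto g atTop (𝓝 m) := hf.congr' <| by
    filter_upwards [eventually_ne_atTop a] with y hy
    exact (Function.update_of_ne hy _ _).symm
  have hint := integrableOn_Ioi_deriv_of_nonneg hcont hderiv' hf' hg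
  refine ⟨hint, ?_⟩
  simpa [g] using integral_Ioi_of_hasDerivAt_of_tendsto hcont hderiv' hint hg

lemma tendsto_sqrt_nhdsGT_zero : Tendsto sqrt (𝓝[>] 0) (𝓝[>] 0) :=
  tendsto_nhdsWithin_iff.2
    ⟨by simpa using (continuous_sqrt.tendsto 0).mono_left nhdsWithin_le_nhds,
      eventually_mem_nhdsWithin.mono fun _ hx => sqrt_pos.2 hx⟩

lemma tendsto_inv_pow_mul_exp_neg_div_sq (n : ℕ) {c : ℝ} (hc : 0 < c) :
    Tendsto (fun t : ℝ => (t ^ n)⁻¹ * exp (-c / t ^ 2)) (𝓝[>] 0) (𝓝 0) := by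
  have h := (tendsto_rpow_mul_exp_neg_mul_atTop_nhds_zero (n / 2) c hc).comp
    ((tendsto_pow_atTop two_ne_zero).comp tendsto_inv_nhdsGT_zero)
  refine h.congr' ?_
  filter_upwards [self_mem_nhdsWithin] with t (ht : 0 < t)
  simp only [Function.comp_apply]
  rw [← rpow_natCast t⁻¹ 2, ← rpow_mul (by positivity), Nat.cast_ofNat,
    mul_div_cancel₀ _ two_ne_zero, rpow_natCast]
  simp only [rpow_two, inv_pow, div_eq_mul_inv]

noncomputable def gaussianPrimitive (y : ℝ) : ℝ := ∫ t in (0 : ℝ)..y, exp (-t ^ 2)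

lemma hasDerivAt_gaussianPrimitive (y : ℝ) : HasDerivAt gaussianPrimitive (exp (-y ^ 2)) y := by
  have hc : Continuous fun t : ℝ => exp (-t ^ 2) := by fun_prop
  exact intervalIntegral.integral_hasDerivAt_right (hc.intervalIntegrable 0 y)
    (hc.stronglyMeasurableAtFilter _ _) hc.continuousAt

lemma tendsto_gaussianPrimitive_atTop : Tendsto gaussianPrimitive atTop (𝓝 (√π / 2)) := by
  have hint : IntegrableOn (fun t : ℝ => exp (-t ^ 2)) (Ioi 0) := by
    simpa using (integrable_exp_neg_mul_sq one_pos).integrableOn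
  have hval : ∫ t in Ioi (0 : ℝ), exp (-t ^ 2) = √π / 2 := by
    simpa using integral_gaussian_Ioi 1
  exact hval ▸ intervalIntegral_tendsto_integral_Ioi 0 hint tendsto_id

lemma gaussianPrimitive_neg (y : ℝ) : gaussianPrimitive (-y) = -gaussianPrimitive y := by
  have h := intervalIntegral.integral_comp_neg (a := 0) (b := y) fun t : ℝ => exp (-t ^ 2)
  simp only [neg_sq, neg_zero] at h
  rw [gaussianPrimitive, gaussianPrimitive, intervalIntegral.integral_symm, h]

lemma tendsto_gaussianPrimitive_atBot : Tendsto gaussianPrimitive atBot (𝓝 (-(√π / 2))) := by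
  refine ((tendsto_gaussianPrimitive_atTop.comp tendsto_neg_atBot_atTop).neg).congr fun y => ?_
  simp [gaussianPrimitive_neg]

section
variable {a s : ℝ}

/-- The coefficients of the two Gaussian primitives are chosen so that their derivatives cancel
the `t⁰` and `t⁻²` terms in the derivative of the elementary part. -/
noncomputable def laplaceAntideriv (a s t : ℝ) : ℝ :=
  (exp (-(a * s)) * (s ^ 2 + 6 * s / a + 6 / a ^ 2) * gaussianPrimitive (s * t - a / (2 * t))
    + exp (a * s) * (6 * s / a - s ^ 2 - 6 / a ^ 2) * gaussianPrimitive (s * t + a / (2 * t))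
    + (6 / (a * t) + a / (2 * t ^ 3)) * exp (-(s ^ 2 * t ^ 2) - a ^ 2 / (4 * t ^ 2))) / √π

lemma hasDerivAt_laplaceAntideriv {t : ℝ} (ha : a ≠ 0) (ht : t ≠ 0) :
    HasDerivAt (laplaceAntideriv a s)
      (exp (-(s ^ 2 * t ^ 2) - a ^ 2 / (4 * t ^ 2)) *
        (3 * a / (2 * t ^ 4) + a ^ 3 / (4 * t ^ 6)) / √π) t := by
  have hsq_sub : exp (-(s * t - a / (2 * t)) ^ 2) =
      exp (a * s) * exp (-(s ^ 2 * t ^ 2) - a ^ 2 / (4 * t ^ 2)) := by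
    rw [← exp_add]; congr 1; field_simp; ring
  have hsq_add : exp (-(s * t + a / (2 * t)) ^ 2) =
      exp (-(a * s)) * exp (-(s ^ 2 * t ^ 2) - a ^ 2 / (4 * t ^ 2)) := by
    rw [← exp_add]; congr 1; field_simp; ring
  have hpole := (hasDerivAt_const t a).div ((hasDerivAt_id' t).const_mul 2) (by positivity)
  have hlin := (hasDerivAt_id' t).const_mul s
  have hΦ₁ := (hasDerivAt_gaussianPrimitive _).comp t (hlin.sub hpole)
  have hΦ₂ := (hasDerivAt_gaussianPrimitive _).comp t (hlin.add hpole)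
  have hrat := ((hasDerivAt_const t 6).div ((hasDerivAt_id' t).const_mul a) (by positivity)).add
    ((hasDerivAt_const t a).div ((hasDerivAt_pow 3 t).const_mul 2) (by positivity))
  have hexp := (((hasDerivAt_pow 2 t).const_mul (s ^ 2)).neg.sub
    ((hasDerivAt_const t (a ^ 2)).div ((hasDerivAt_pow 2 t).const_mul 4) (by positivity))).exp
  refine ((((hΦ₁.const_mul (exp (-(a * s)) * (s ^ 2 + 6 * s / a + 6 / a ^ 2))).add
    (hΦ₂.const_mul (exp (a * s) * (6 * s / a - s ^ 2 - 6 / a ^ 2)))).add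
    (hrat.mul hexp)).div_const √π).congr_deriv ?_
  simp only [Pi.sub_apply, Pi.add_apply, Pi.div_apply, Pi.neg_apply]
  rw [hsq_sub, hsq_add, exp_neg (a * s)]
  field_simp
  ring

lemma hasDerivAt_laplaceAntideriv_sqrt {x : ℝ} (ha : a ≠ 0) (hx : 0 < x) :
    HasDerivAt (fun x => laplaceAntideriv a s √x)
      (exp (-s ^ 2 * x) * (1 / (8 * √π) * x ^ (-(7 : ℝ) / 2) * exp (-a ^ 2 / (4 * x)) *
        (a ^ 3 + 6 * a * x))) x := by
  obtain ⟨t, ht, rfl⟩ : ∃ t, 0 < t ∧ t ^ 2 = x := ⟨√x, sqrt_pos.2 hx, sq_sqrt hx.le⟩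
  have hsqrt : HasDerivAt sqrt (1 / (2 * t)) (t ^ 2) := by
    simpa [sqrt_sq ht.le] using hasDerivAt_sqrt (pow_pos ht 2).ne'
  have hG : HasDerivAt (laplaceAntideriv a s)
      (exp (-(s ^ 2 * t ^ 2) - a ^ 2 / (4 * t ^ 2)) *
        (3 * a / (2 * t ^ 4) + a ^ 3 / (4 * t ^ 6)) / √π) √(t ^ 2) := by
    rw [sqrt_sq ht.le]
    exact hasDerivAt_laplaceAntideriv ha ht.ne'
  have hpow : (t ^ 2) ^ (-(7 : ℝ) / 2) = (t ^ 7)⁻¹ := by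
    rw [← rpow_natCast t 2, ← rpow_mul ht.le, ← rpow_natCast, ← rpow_neg ht.le]
    norm_num
  refine (hG.comp (t ^ 2) hsqrt).congr_deriv ?_
  rw [hpow, sub_eq_add_neg, exp_add, neg_mul, neg_div]
  field_simp
  ring

lemma tendsto_laplaceAntideriv_nhdsGT_zero (ha : 0 < a) :
    Tendsto (laplaceAntideriv a s) (𝓝[>] 0)
      (𝓝 ((exp (a * s) * (6 * s / a - s ^ 2 - 6 / a ^ 2)
        - exp (-(a * s)) * (s ^ 2 + 6 * s / a + 6 / a ^ 2)) / 2)) := by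
  have hlin : Tendsto (fun t => s * t) (𝓝[>] 0) (𝓝 0) := by
    simpa using ((continuous_const_mul s).tendsto 0).mono_left nhdsWithin_le_nhds
  have hpole : Tendsto (fun t => a / (2 * t)) (𝓝[>] 0) atTop :=
    (tendsto_inv_nhdsGT_zero.const_mul_atTop (half_pos ha)).congr fun t => by ring
  have hΦ₁ := tendsto_gaussianPrimitive_atBot.comp <|
    (hlin.add_atBot (tendsto_neg_atTop_atBot.comp hpole)).congr fun t => (sub_eq_add_neg _ _).symm
  have hΦ₂ := tendsto_gaussianPrimitive_atTop.comp (hlin.add_atTop hpole)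
  have hgauss : Tendsto (fun t => exp (-(s ^ 2 * t ^ 2))) (𝓝[>] 0) (𝓝 1) := by
    simpa using ((by fun_prop : Continuous fun t => exp (-(s ^ 2 * t ^ 2))).tendsto 0).mono_left
      nhdsWithin_le_nhds
  have hc : 0 < a ^ 2 / 4 := by positivity
  have hrat := (((tendsto_inv_pow_mul_exp_neg_div_sq 1 hc).const_mul (6 / a)).add
    ((tendsto_inv_pow_mul_exp_neg_div_sq 3 hc).const_mul (a / 2))).mul hgauss
  rw [show (6 / a * 0 + a / 2 * 0) * 1 = (0 : ℝ) by ring] at hrat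
  have hrat' : Tendsto (fun t => (6 / (a * t) + a / (2 * t ^ 3)) *
      exp (-(s ^ 2 * t ^ 2) - a ^ 2 / (4 * t ^ 2))) (𝓝[>] 0) (𝓝 0) := by
    refine hrat.congr' ?_
    filter_upwards [self_mem_nhdsWithin] with t (ht : 0 < t)
    rw [sub_eq_add_neg, exp_add]
    field_simp
  have key : Tendsto (laplaceAntideriv a s) (𝓝[>] 0)
      (𝓝 ((_ * -(√π / 2) + _ * (√π / 2) + 0) / √π)) :=
    (((hΦ₁.const_mul _).add (hΦ₂.const_mul _)).add hrat').div_const √π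
  convert key using 2
  field_simp
  ring

lemma tendsto_laplaceAntideriv_atTop (ha : 0 < a) (hs : 0 < s) :
    Tendsto (laplaceAntideriv a s) atTop
      (𝓝 ((exp (-(a * s)) * (s ^ 2 + 6 * s / a + 6 / a ^ 2)
        + exp (a * s) * (6 * s / a - s ^ 2 - 6 / a ^ 2)) / 2)) := by
  have hlin : Tendsto (fun t => s * t) atTop atTop := tendsto_id.const_mul_atTop hs
  have hpole : Tendsto (fun t => a / (2 * t)) atTop (𝓝 0) :=
    tendsto_const_nhds.div_atTop (tendsto_id.const_mul_atTop two_pos)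
  have hΦ₁ := tendsto_gaussianPrimitive_atTop.comp <|
    (hlin.atTop_add hpole.neg).congr fun t => (sub_eq_add_neg _ _).symm
  have hΦ₂ := tendsto_gaussianPrimitive_atTop.comp (hlin.atTop_add hpole)
  have hrat : Tendsto (fun t => 6 / (a * t) + a / (2 * t ^ 3)) atTop (𝓝 0) := by
    simpa using (tendsto_const_nhds.div_atTop (tendsto_id.const_mul_atTop ha)).add
      (tendsto_const_nhds.div_atTop ((tendsto_pow_atTop three_ne_zero).const_mul_atTop two_pos))
  have hexp : Tendsto (fun t => exp (-(s ^ 2 * t ^ 2) - a ^ 2 / (4 * t ^ 2))) atTop (𝓝 0) := by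
    refine tendsto_exp_atBot.comp (tendsto_atBot_mono (fun t => ?_) <|
      tendsto_neg_atTop_atBot.comp ((tendsto_pow_atTop two_ne_zero).const_mul_atTop (pow_pos hs 2)))
    have : 0 ≤ a ^ 2 / (4 * t ^ 2) := by positivity
    simp only [Function.comp_apply]
    linarith
  have key : Tendsto (laplaceAntideriv a s) atTop
      (𝓝 ((_ * (√π / 2) + _ * (√π / 2) + 0 * 0) / √π)) :=
    (((hΦ₁.const_mul _).add (hΦ₂.const_mul _)).add (hrat.mul hexp)).div_const √π
  convert key using 2
  field_simp
  ring

end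

/-- For `a > 0` and `λ > 0`, the integral of
`e^{-λx} (1/(8√π)) x^{-7/2} e^{-a²/(4x)} (a³ + 6ax)` over `(0,∞)` equals
`λ e^{-a√λ} + (6/a) √λ e^{-a√λ} + (6/a²) e^{-a√λ}`; in particular
`x ↦ e^{-λx} |g_a(x)|` is integrable on `(0,∞)` and its integral is bounded by the same
quantity, where `g_a(x) = (1/(8√π)) x^{-7/2} e^{-a²/(4x)} (a³ - 6ax)`. -/
theorem laplace_abs_ga_bound (a l : ℝ) (ha : 0 < a) (hl : 0 < l) :
    (∫ x in Set.Ioi (0 : ℝ),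
      Real.exp (-l * x) *
        (1 / (8 * Real.sqrt Real.pi) * x ^ (-(7 : ℝ) / 2) * Real.exp (-a ^ 2 / (4 * x)) *
          (a ^ 3 + 6 * a * x))
      = l * Real.exp (-a * Real.sqrt l) + (6 / a) * Real.sqrt l * Real.exp (-a * Real.sqrt l)
          + (6 / a ^ 2) * Real.exp (-a * Real.sqrt l)) ∧
    MeasureTheory.IntegrableOn
      (fun x : ℝ => Real.exp (-l * x) *
        |1 / (8 * Real.sqrt Real.pi) * x ^ (-(7 : ℝ) / 2) * Real.exp (-a ^ 2 / (4 * x)) *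
          (a ^ 3 - 6 * a * x)|) (Set.Ioi (0 : ℝ)) ∧
    (∫ x in Set.Ioi (0 : ℝ),
      Real.exp (-l * x) *
        |1 / (8 * Real.sqrt Real.pi) * x ^ (-(7 : ℝ) / 2) * Real.exp (-a ^ 2 / (4 * x)) *
          (a ^ 3 - 6 * a * x)|
      ≤ l * Real.exp (-a * Real.sqrt l) + (6 / a) * Real.sqrt l * Real.exp (-a * Real.sqrt l)
          + (6 / a ^ 2) * Real.exp (-a * Real.sqrt l)) := by
  set s := √l
  have hs : 0 < s := sqrt_pos.2 hl
  have hsl : s ^ 2 = l := sq_sqrt hl.le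
  set k : ℝ → ℝ := fun x => 1 / (8 * √π) * x ^ (-(7 : ℝ) / 2) * exp (-a ^ 2 / (4 * x))
  have hk : ∀ x ∈ Ioi (0 : ℝ), 0 ≤ k x := fun x (hx : 0 < x) => by positivity
  obtain ⟨hint, hval⟩ := integral_Ioi_of_hasDerivAt_of_nonneg_of_tendsto
    (f := fun x => laplaceAntideriv a s √x)
    (fun x hx => hsl ▸ hasDerivAt_laplaceAntideriv_sqrt ha.ne' hx)
    (fun x (hx : 0 < x) => mul_nonneg (exp_pos _).le (mul_nonneg (hk x hx) (by positivity)))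
    ((tendsto_laplaceAntideriv_nhdsGT_zero ha).comp tendsto_sqrt_nhdsGT_zero)
    ((tendsto_laplaceAntideriv_atTop ha hs).comp tendsto_sqrt_atTop)
  have hI : ∫ x in Ioi 0, exp (-l * x) * (k x * (a ^ 3 + 6 * a * x)) =
      l * exp (-a * s) + 6 / a * s * exp (-a * s) + 6 / a ^ 2 * exp (-a * s) := by
    rw [hval, ← hsl, neg_mul]
    ring
  have hle : ∀ x ∈ Ioi (0 : ℝ), exp (-l * x) * |k x * (a ^ 3 - 6 * a * x)| ≤
      exp (-l * x) * (k x * (a ^ 3 + 6 * a * x)) := fun x (hx : 0 < x) => by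
    rw [abs_mul, abs_of_nonneg (hk x hx)]
    gcongr
    exact abs_le.2 ⟨by nlinarith, by nlinarith⟩
  have hint' : IntegrableOn (fun x => exp (-l * x) * |k x * (a ^ 3 - 6 * a * x)|) (Ioi 0) := by
    refine hint.mono' (Measurable.aestronglyMeasurable (by fun_prop)) ?_
    refine (ae_restrict_iff' measurableSet_Ioi).2 (ae_of_all _ fun x hx => ?_)
    rw [norm_of_nonneg (by positivity)]
    exact hle x hx
  exact ⟨hI, hint', (setIntegral_mono_on hint' hint measurableSet_Ioi hle).trans hI.le⟩
end

section
/- Let y, z > 0 and set ρ = max(z, y/2) and δ = min(max(2(y−z)/y, 0), 1). Then coth(ρ) − 1 − (sinh(δy) − δy)/(4 sinh⁴(y/2)) = Σ_{n≥1} 2 e^{−2nρ} + Σ_{n≥2} (n(n²−1)/3) · ( e^{−(n+δ)y} − e^{−(n−δ)y} + 2δy e^{−ny} ), where both series converge absolutely. -/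
/-- Series expansion of `L₁(y/2, z)`: for `y, z > 0`, with `ρ = max(z, y/2)` and
`δ = min(max(2(y-z)/y, 0), 1)`,
`coth ρ - 1 - (sinh(δy) - δy)/(4 sinh⁴(y/2))
  = Σ_{n≥1} 2 e^{-2nρ} + Σ_{n≥2} (n(n²-1)/3)(e^{-(n+δ)y} - e^{-(n-δ)y} + 2δy e^{-ny})`,
both series converging absolutely. -/
theorem series_expansion_L1 (y z : ℝ) (hy : 0 < y) (hz : 0 < z) :
    let ρ : ℝ := max z (y / 2)
    let δ : ℝ := min (max (2 * (y - z) / y) 0) 1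
    Summable (fun n : ℕ => 2 * Real.exp (-(2 * ((n : ℝ) + 1) * ρ))) ∧
    Summable (fun n : ℕ =>
      (((n : ℝ) + 2) * (((n : ℝ) + 2) ^ 2 - 1) / 3) *
        (Real.exp (-((((n : ℝ) + 2) + δ) * y)) - Real.exp (-((((n : ℝ) + 2) - δ) * y))
          + 2 * δ * y * Real.exp (-(((n : ℝ) + 2) * y)))) ∧
    Real.cosh ρ / Real.sinh ρ - 1 - (Real.sinh (δ * y) - δ * y) / (4 * (Real.sinh (y / 2)) ^ 4)
      = (∑' n : ℕ, 2 * Real.exp (-(2 * ((n : ℝ) + 1) * ρ)))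
        + ∑' n : ℕ,
            (((n : ℝ) + 2) * (((n : ℝ) + 2) ^ 2 - 1) / 3) *
              (Real.exp (-((((n : ℝ) + 2) + δ) * y)) - Real.exp (-((((n : ℝ) + 2) - δ) * y))
                + 2 * δ * y * Real.exp (-(((n : ℝ) + 2) * y))) := by
  intro ρ δ
  have hρ : 0 < ρ := lt_of_lt_of_le (half_pos hy) (le_max_right _ _)
  -- First series: geometric
  set r : ℝ := Real.exp (-(2 * ρ)) with hr_def
  have hr0 : 0 < r := Real.exp_pos _
  have hr1 : r < 1 := Real.exp_lt_one_iff.2 (by linarith)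
  have key1 : ∀ n : ℕ, Real.exp (-(2 * ((n : ℝ) + 1) * ρ)) = r ^ n * r := by
    intro n
    rw [hr_def, ← Real.exp_nat_mul, ← Real.exp_add]
    congr 1
    push_cast
    ring
  have hfun1 : (fun n : ℕ => 2 * Real.exp (-(2 * ((n : ℝ) + 1) * ρ)))
      = fun n : ℕ => (2 * r) * r ^ n := by
    funext n; rw [key1 n]; ring
  have h1 : HasSum (fun n : ℕ => 2 * Real.exp (-(2 * ((n : ℝ) + 1) * ρ)))
      ((2 * r) * (1 - r)⁻¹) := by
    rw [hfun1]
    exact (hasSum_geometric_of_lt_one hr0.le hr1).mul_left _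
  have hval1 : (2 * r) * (1 - r)⁻¹ = Real.cosh ρ / Real.sinh ρ - 1 := by
    have hE : Real.exp ρ ≠ 0 := (Real.exp_pos _).ne'
    have eneg : Real.exp (-ρ) = Real.exp ρ * r := by
      rw [hr_def, ← Real.exp_add]; congr 1; ring
    have hs : Real.sinh ρ = Real.exp ρ * (1 - r) / 2 := by
      rw [Real.sinh_eq, eneg]; ring
    have hc : Real.cosh ρ = Real.exp ρ * (1 + r) / 2 := by
      rw [Real.cosh_eq, eneg]; ring
    have h1r : (1 : ℝ) - r ≠ 0 := by linarith
    rw [hs, hc]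
    field_simp
    ring
  -- Second series
  set q : ℝ := Real.exp (-y) with hq_def
  set s : ℝ := Real.exp (δ * y) with hs_def
  set t : ℝ := Real.exp (-(δ * y)) with ht_def
  have hq0 : 0 < q := Real.exp_pos _
  have hq1 : q < 1 := Real.exp_lt_one_iff.2 (by linarith)
  set C : ℝ := 2 * (t - s + 2 * δ * y) * q ^ 2 with hC_def
  have hchoose : HasSum (fun n : ℕ => (((n + 3).choose 3 : ℕ) : ℝ) * q ^ n)
      (1 / (1 - q) ^ 4) := by
    have := hasSum_choose_mul_geometric_of_norm_lt_one (𝕜 := ℝ) 3 (r := q)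
      (by rw [Real.norm_eq_abs, abs_of_pos hq0]; exact hq1)
    simpa using this
  have hcast : ∀ n : ℕ, (((n + 3).choose 3 : ℕ) : ℝ)
      = ((n : ℝ) + 1) * ((n : ℝ) + 2) * ((n : ℝ) + 3) / 6 := by
    intro n
    have h : (n + 3).descFactorial 3 = Nat.factorial 3 * (n + 3).choose 3 :=
      Nat.descFactorial_eq_factorial_mul_choose (n + 3) 3
    have h2 : (n + 3).descFactorial 3 = (n + 3) * ((n + 2) * ((n + 1) * 1)) := by
      simp [Nat.descFactorial]; ring
    have h3 : ((n + 3) * ((n + 2) * ((n + 1) * 1)) : ℕ) = 6 * (n + 3).choose 3 := by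
      rw [← h2, h]; norm_num [Nat.factorial]
    have h4 := congrArg (fun k : ℕ => (k : ℝ)) h3
    push_cast at h4
    push_cast
    linarith
  have keyq : ∀ n : ℕ, Real.exp (-(((n : ℝ) + 2) * y)) = q ^ n * q ^ 2 := by
    intro n
    rw [hq_def, ← pow_add, ← Real.exp_nat_mul]
    congr 1
    push_cast
    ring
  have keyp : ∀ n : ℕ, Real.exp (-((((n : ℝ) + 2) + δ) * y)) = q ^ n * q ^ 2 * t := by
    intro n
    rw [show -((((n : ℝ) + 2) + δ) * y) = -(((n : ℝ) + 2) * y) + -(δ * y) by ring,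
      Real.exp_add, keyq n, ht_def]
  have keym : ∀ n : ℕ, Real.exp (-((((n : ℝ) + 2) - δ) * y)) = q ^ n * q ^ 2 * s := by
    intro n
    rw [show -((((n : ℝ) + 2) - δ) * y) = -(((n : ℝ) + 2) * y) + δ * y by ring,
      Real.exp_add, keyq n, hs_def]
  have hfun2 : (fun n : ℕ =>
      (((n : ℝ) + 2) * (((n : ℝ) + 2) ^ 2 - 1) / 3) *
        (Real.exp (-((((n : ℝ) + 2) + δ) * y)) - Real.exp (-((((n : ℝ) + 2) - δ) * y))
          + 2 * δ * y * Real.exp (-(((n : ℝ) + 2) * y))))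
      = fun n : ℕ => C * ((((n + 3).choose 3 : ℕ) : ℝ) * q ^ n) := by
    funext n
    rw [keyp n, keym n, keyq n, hcast n, hC_def]
    ring
  have h2 : HasSum (fun n : ℕ =>
      (((n : ℝ) + 2) * (((n : ℝ) + 2) ^ 2 - 1) / 3) *
        (Real.exp (-((((n : ℝ) + 2) + δ) * y)) - Real.exp (-((((n : ℝ) + 2) - δ) * y))
          + 2 * δ * y * Real.exp (-(((n : ℝ) + 2) * y))))
      (C * (1 / (1 - q) ^ 4)) := by
    rw [hfun2]
    exact hchoose.mul_left _
  have hval2 : C * (1 / (1 - q) ^ 4)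
      = -((Real.sinh (δ * y) - δ * y) / (4 * (Real.sinh (y / 2)) ^ 4)) := by
    set A : ℝ := Real.exp (y / 2) with hA_def
    have hA0 : A ≠ 0 := (Real.exp_pos _).ne'
    have eneg : Real.exp (-(y / 2)) = A * q := by
      rw [hA_def, hq_def, ← Real.exp_add]; congr 1; ring
    have hsinh : Real.sinh (y / 2) = A * (1 - q) / 2 := by
      rw [Real.sinh_eq, eneg]; ring
    have hrel : A ^ 2 * q = 1 := by
      rw [hA_def, hq_def, sq, ← Real.exp_add, ← Real.exp_add]
      norm_num
    have hsd : Real.sinh (δ * y) = (s - t) / 2 := by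
      rw [Real.sinh_eq, hs_def, ht_def]
    have h1q : (1 : ℝ) - q ≠ 0 := by linarith
    have hA4 : A ^ 4 * q ^ 2 = 1 := by linear_combination (A ^ 2 * q + 1) * hrel
    have hS4 : (Real.sinh (y / 2)) ^ 4 * (16 * q ^ 2) = (1 - q) ^ 4 := by
      rw [hsinh]; linear_combination (1 - q) ^ 4 * hA4
    have hsne : Real.sinh (y / 2) ≠ 0 := by
      rw [hsinh]
      have : 0 < A * (1 - q) / 2 := by
        have : (0 : ℝ) < A := Real.exp_pos _
        have h1 : 0 < 1 - q := by linarith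
        positivity
      exact this.ne'
    rw [hC_def, hsd, ← hS4]
    field_simp
    ring
  refine ⟨h1.summable, h2.summable, ?_⟩
  rw [h1.tsum_eq, h2.tsum_eq, hval1, hval2]
  ring
end

section
/- For every y > 0, 2 Σ_{n≥1} (2n²y² − 1) e^{−n²y²} + (4π^{5/2}/y³) Σ_{n≥1} n² e^{−n²π²/y²} = 1. -/
/-!
Let `θ(t) = ∑_{n ∈ ℤ} e^{-π n² t}` and `ψ(t) = ∑_{n ∈ ℤ} n² e^{-π n² t}`, so that `θ' = -π ψ`.
Poisson summation gives `√t θ(t) = θ(1/t)`; differentiating this in `t` yields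
`t √t (θ(t) - 2π t ψ(t)) = 2π ψ(1/t)`. At `t = y²/π`, with the even sums over `ℤ` folded into
sums over `n ≥ 1`, this is the identity.
-/

open Real Filter Topology

/-- `realTheta t = jacobiTheta (t * I)`. -/
noncomputable def realTheta (t : ℝ) : ℝ := ∑' n : ℤ, rexp (-π * t * n ^ 2)

noncomputable def realThetaSq (t : ℝ) : ℝ := ∑' n : ℤ, (n : ℝ) ^ 2 * rexp (-π * t * n ^ 2)

lemma summable_int_pow_mul_exp_neg_mul_sq (k : ℕ) {c : ℝ} (hc : 0 < c) :
    Summable fun n : ℤ => (n : ℝ) ^ k * rexp (-c * n ^ 2) := by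
  refine (summable_pow_mul_jacobiTheta₂_term_bound 0 (T := c / π) (by positivity) k).of_norm_bounded
    fun n => le_of_eq ?_
  rw [norm_mul, norm_pow, Real.norm_eq_abs, Real.norm_of_nonneg (exp_pos _).le, Int.cast_abs]
  congr 2
  field_simp
  ring

lemma hasDerivAt_realTheta {t : ℝ} (ht : 0 < t) :
    HasDerivAt realTheta (-π * realThetaSq t) t := by
  have hbound : Summable fun n : ℤ => π * ((n : ℝ) ^ 2 * rexp (-(π * (t / 2)) * n ^ 2)) :=
    (summable_int_pow_mul_exp_neg_mul_sq 2 (by positivity)).mul_left π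
  have hderiv (n : ℤ) (s : ℝ) : HasDerivAt (fun s => rexp (-π * s * n ^ 2))
      (-π * ((n : ℝ) ^ 2 * rexp (-π * s * n ^ 2))) s := by
    convert (((hasDerivAt_id' s).const_mul (-π)).mul_const ((n : ℝ) ^ 2)).exp using 1
    ring
  have hle (n : ℤ) (s : ℝ) (hs : s ∈ Set.Ioi (t / 2)) :
      ‖-π * ((n : ℝ) ^ 2 * rexp (-π * s * n ^ 2))‖
        ≤ π * ((n : ℝ) ^ 2 * rexp (-(π * (t / 2)) * n ^ 2)) := by
    rw [norm_mul, norm_neg, Real.norm_of_nonneg pi_pos.le,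
      Real.norm_of_nonneg (by positivity)]
    gcongr
    have : t / 2 < s := hs
    nlinarith [pi_pos, sq_nonneg (n : ℝ)]
  have hsum : Summable fun n : ℤ => rexp (-π * t * n ^ 2) := by
    simpa [neg_mul] using summable_int_pow_mul_exp_neg_mul_sq 0 (mul_pos pi_pos ht)
  rw [realThetaSq, ← tsum_mul_left]
  exact hasDerivAt_tsum_of_isPreconnected hbound isOpen_Ioi isPreconnected_Ioi
    (fun n s _ => hderiv n s) hle (half_lt_self ht) hsum (half_lt_self ht)

lemma realTheta_functional_equation {t : ℝ} (ht : 0 < t) : √t * realTheta t = realTheta t⁻¹ := by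
  rw [realTheta, Real.tsum_exp_neg_mul_int_sq ht, realTheta, ← sqrt_eq_rpow, ← mul_assoc,
    mul_one_div_cancel (sqrt_pos.2 ht).ne', one_mul]
  simp only [div_eq_mul_inv]

lemma realThetaSq_functional_equation {t : ℝ} (ht : 0 < t) :
    t * √t * (realTheta t - 2 * π * t * realThetaSq t) = 2 * π * realThetaSq t⁻¹ := by
  have hL := (hasDerivAt_sqrt ht.ne').mul (hasDerivAt_realTheta ht)
  have hR := (hasDerivAt_realTheta (inv_pos.2 ht)).comp t (hasDerivAt_inv ht.ne')
  have heq : (fun s => √s * realTheta s) =ᶠ[𝓝 t] fun s => realTheta s⁻¹ :=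
    eventually_of_mem (Ioi_mem_nhds ht) fun s hs => realTheta_functional_equation hs
  have h := hL.unique (hR.congr_of_eventuallyEq heq)
  have hs := sqrt_pos.2 ht
  field_simp at h
  rw [sq_sqrt ht.le, one_div] at h
  refine mul_left_cancel₀ hs.ne' ?_
  linear_combination h + (t * realTheta t - 2 * π * t ^ 2 * realThetaSq t) * sq_sqrt ht.le

lemma tsum_int_eq_add_two_mul_tsum_nat {f : ℤ → ℝ} (hf : f.Even) (hs : Summable f) :
    ∑' n, f n = f 0 + 2 * ∑' n : ℕ, f (n + 1) := by
  rw [tsum_int_eq_zero_add_two_mul_tsum_pnat hf hs, tsum_pnat_eq_tsum_succ (f := fun n : ℕ => f n),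
    nsmul_eq_mul]
  push_cast
  rfl

lemma summable_nat_succ_pow_mul_exp (k : ℕ) {c : ℝ} (hc : 0 < c) :
    Summable fun n : ℕ => ((n : ℝ) + 1) ^ k * rexp (-(((n : ℝ) + 1) ^ 2 * c)) := by
  have hinj : Function.Injective fun n : ℕ => (n : ℤ) + 1 := fun a b h => by simpa using h
  refine ((summable_int_pow_mul_exp_neg_mul_sq k hc).comp_injective hinj).congr fun n => ?_
  simp [mul_comm c]

lemma realTheta_div_pi {c : ℝ} (hc : 0 < c) :
    realTheta (c / π) = 1 + 2 * ∑' n : ℕ, rexp (-(((n : ℝ) + 1) ^ 2 * c)) := by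
  have hcoef : -π * (c / π) = -c := by field_simp
  have hsum := summable_int_pow_mul_exp_neg_mul_sq 0 hc
  simp only [pow_zero, one_mul] at hsum
  rw [realTheta, hcoef, tsum_int_eq_add_two_mul_tsum_nat (fun n => by simp) hsum]
  simp [mul_comm c]

lemma realThetaSq_div_pi {c : ℝ} (hc : 0 < c) :
    realThetaSq (c / π) = 2 * ∑' n : ℕ, ((n : ℝ) + 1) ^ 2 * rexp (-(((n : ℝ) + 1) ^ 2 * c)) := by
  have hcoef : -π * (c / π) = -c := by field_simp
  rw [realThetaSq, hcoef,
    tsum_int_eq_add_two_mul_tsum_nat (fun n => by simp) (summable_int_pow_mul_exp_neg_mul_sq 2 hc)]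
  simp [mul_comm c]

/-- Jacobi-type identity for the height of the Brownian tree: for `y > 0`,
`2 Σ_{n≥1} (2n²y² - 1) e^{-n²y²} + (4π^{5/2}/y³) Σ_{n≥1} n² e^{-n²π²/y²} = 1`. -/
theorem height_tail_plus_cdf_eq_one (y : ℝ) (hy : 0 < y) :
    2 * (∑' n : ℕ, (2 * ((n : ℝ) + 1) ^ 2 * y ^ 2 - 1) *
          Real.exp (-(((n : ℝ) + 1) ^ 2 * y ^ 2)))
      + (4 * Real.pi ^ 2 * Real.sqrt Real.pi / y ^ 3) *
          ∑' n : ℕ, ((n : ℝ) + 1) ^ 2 *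
            Real.exp (-(((n : ℝ) + 1) ^ 2 * Real.pi ^ 2 / y ^ 2)) = 1 := by
  have hy2 : 0 < y ^ 2 := by positivity
  have hS0 := summable_nat_succ_pow_mul_exp 0 hy2
  simp only [pow_zero, one_mul] at hS0
  have hS2 := (summable_nat_succ_pow_mul_exp 2 hy2).mul_left (2 * y ^ 2)
  have hfirst : ∑' n : ℕ, (2 * ((n : ℝ) + 1) ^ 2 * y ^ 2 - 1) * rexp (-(((n : ℝ) + 1) ^ 2 * y ^ 2))
      = 2 * y ^ 2 * ∑' n : ℕ, ((n : ℝ) + 1) ^ 2 * rexp (-(((n : ℝ) + 1) ^ 2 * y ^ 2))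
        - ∑' n : ℕ, rexp (-(((n : ℝ) + 1) ^ 2 * y ^ 2)) := by
    rw [← tsum_mul_left, ← hS2.tsum_sub hS0]
    congr 1 with n
    ring
  have h := realThetaSq_functional_equation (t := y ^ 2 / π) (by positivity)
  rw [inv_div, show π / y ^ 2 = π ^ 2 / y ^ 2 / π by field_simp, realTheta_div_pi hy2,
    realThetaSq_div_pi hy2, realThetaSq_div_pi (by positivity), sqrt_div hy2.le, sqrt_sq hy.le] at h
  rw [hfirst]
  field_simp at h ⊢
  linear_combination -h
end

section
/- For every y > 0, setting a_n = 4(πn/y)² for n ≥ 1, one has Σ_{n≥2} (n²−1) ( (1/6) n⁴y⁴ − 2n²y² + 2 ) e^{−n²y²/4} + (√π/3) Σ_{n≥1} ( (8/y³)(24 a_n − 36 a_n² + 8 a_n³) + (16/y) a_n² ) e^{−a_n} = 1. -/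
/-!
Put `t = y² / (4π)`, so that `e^{-n²y²/4} = e^{-π t n²}` and `e^{-aₙ} = e^{-π n² / t}`.
Up to constants, both series are then halves of even series over `ℤ` of the form
`∑ p(n²) e^{-π s n²}` with `p` a cubic, i.e. combinations of the moments `Q_k(s) = ∑_{n ∈ ℤ} n^{2k} e^{-π s n²}` at `s = t` and `s = 1/t`.
Since `Q_k' = -π Q_{k+1}`, differentiating Jacobi's identity `Q₀(t) = t^{-1/2} Q₀(1/t)` three
times expresses `Q₁(t), Q₂(t), Q₃(t)` through `Q_j(1/t)`, and the two combinations cancel.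
-/

open Real Finset

noncomputable def thetaMoment (k : ℕ) (t : ℝ) : ℝ :=
  ∑' n : ℤ, (n : ℝ) ^ (2 * k) * exp (-π * t * n ^ 2)

-- The transformation laws of `thetaMoment` are written in this family, which is closed under
-- differentiation.
noncomputable def thetaMomentDual (j : ℤ) (k : ℕ) (t : ℝ) : ℝ := √t ^ j * thetaMoment k t⁻¹

lemma HasDerivAt.unique_of_eqOn {f g : ℝ → ℝ} {f' g' x : ℝ} {s : Set ℝ} (hs : IsOpen s)
    (hfg : Set.EqOn f g s) (hx : x ∈ s) (hf : HasDerivAt f f' x) (hg : HasDerivAt g g' x) :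
    f' = g' :=
  hf.unique (hg.congr_of_eventuallyEq (hfg.eventuallyEq_of_mem (hs.mem_nhds hx)))

section ThetaMoment

variable {t : ℝ}

lemma summable_thetaMoment (k : ℕ) (ht : 0 < t) :
    Summable fun n : ℤ => (n : ℝ) ^ (2 * k) * exp (-π * t * n ^ 2) := by
  refine (summable_pow_mul_jacobiTheta₂_term_bound 0 ht (2 * k)).congr fun n => ?_
  rw [pow_mul, pow_mul, Int.cast_abs, sq_abs]
  ring_nf

lemma hasDerivAt_thetaMoment (k : ℕ) (ht : 0 < t) :
    HasDerivAt (thetaMoment k) (-π * thetaMoment (k + 1) t) t := by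
  have ht2 : 0 < t / 2 := half_pos ht
  have hmem : t ∈ Set.Ioi (t / 2) := half_lt_self ht
  have hderiv : ∀ (n : ℤ) (s : ℝ), HasDerivAt (fun s => (n : ℝ) ^ (2 * k) * exp (-π * s * n ^ 2))
      (-π * ((n : ℝ) ^ (2 * (k + 1)) * exp (-π * s * n ^ 2))) s := fun n s => by
    refine ((((hasDerivAt_id s).const_mul (-π)).mul_const ((n : ℝ) ^ 2)).exp.const_mul
      ((n : ℝ) ^ (2 * k))).congr_deriv ?_
    rw [id, mul_add, pow_add]
    ring
  have hbound : ∀ (n : ℤ), ∀ s ∈ Set.Ioi (t / 2),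
      ‖-π * ((n : ℝ) ^ (2 * (k + 1)) * exp (-π * s * n ^ 2))‖
        ≤ π * ((n : ℝ) ^ (2 * (k + 1)) * exp (-π * (t / 2) * n ^ 2)) := fun n s hs => by
    have hexp : exp (-π * s * n ^ 2) ≤ exp (-π * (t / 2) * n ^ 2) := by
      simp only [neg_mul, exp_le_exp, neg_le_neg_iff]
      gcongr
      exact le_of_lt hs
    have hpow : 0 ≤ (n : ℝ) ^ (2 * (k + 1)) := (even_two_mul _).pow_nonneg _
    rw [norm_mul, norm_neg, norm_of_nonneg pi_pos.le, norm_of_nonneg (by positivity)]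
    gcongr
  have := hasDerivAt_tsum_of_isPreconnected ((summable_thetaMoment (k + 1) ht2).mul_left π)
    isOpen_Ioi isPreconnected_Ioi (fun n s _ => hderiv n s) hbound hmem
    (summable_thetaMoment k ht) hmem
  rwa [tsum_mul_left] at this

lemma hasDerivAt_thetaMomentDual (j : ℤ) (k : ℕ) (ht : 0 < t) :
    HasDerivAt (thetaMomentDual j k)
      (j / 2 * thetaMomentDual (j - 2) k t + π * thetaMomentDual (j - 4) (k + 1) t) t := by
  have hs : √t ≠ 0 := (sqrt_pos.2 ht).ne'
  have hpow : HasDerivAt (fun x => √x ^ j) (j * √t ^ (j - 1) * (1 / (2 * √t))) t :=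
    (hasDerivAt_zpow j (√t) (Or.inl hs)).comp t (hasDerivAt_sqrt ht.ne')
  have hinv : HasDerivAt (fun x => thetaMoment k x⁻¹)
      (-π * thetaMoment (k + 1) t⁻¹ * -(t ^ 2)⁻¹) t :=
    (hasDerivAt_thetaMoment k (inv_pos.2 ht)).comp t (hasDerivAt_inv ht.ne')
  refine (hpow.mul hinv).congr_deriv ?_
  rw [thetaMomentDual, thetaMomentDual, zpow_sub₀ hs, zpow_sub₀ hs, zpow_sub₀ hs,
    ← sq_sqrt ht.le, sqrt_sq (sqrt_nonneg t)]
  field_simp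

lemma thetaMoment_zero_eq (ht : 0 < t) : thetaMoment 0 t = thetaMomentDual (-1) 0 t := by
  simp only [thetaMoment, thetaMomentDual, mul_zero, pow_zero, one_mul,
    tsum_exp_neg_mul_int_sq ht, zpow_neg_one, sqrt_eq_rpow, div_eq_mul_inv]

lemma thetaMoment_one_eq (ht : 0 < t) :
    π * thetaMoment 1 t = 1 / 2 * thetaMomentDual (-3) 0 t - π * thetaMomentDual (-5) 1 t := by
  have h := (hasDerivAt_thetaMoment 0 ht).unique_of_eqOn isOpen_Ioi
    (fun x hx => thetaMoment_zero_eq hx) ht (hasDerivAt_thetaMomentDual (-1) 0 ht)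
  norm_num at h
  linear_combination -h

lemma thetaMoment_two_eq (ht : 0 < t) :
    π ^ 2 * thetaMoment 2 t = 3 / 4 * thetaMomentDual (-5) 0 t
      - 3 * π * thetaMomentDual (-7) 1 t + π ^ 2 * thetaMomentDual (-9) 2 t := by
  have h := ((hasDerivAt_thetaMoment 1 ht).const_mul π).unique_of_eqOn isOpen_Ioi
    (fun x hx => thetaMoment_one_eq hx) ht
    (((hasDerivAt_thetaMomentDual (-3) 0 ht).const_mul (1 / 2)).sub
      ((hasDerivAt_thetaMomentDual (-5) 1 ht).const_mul π))
  norm_num at h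
  linear_combination -h

lemma thetaMoment_three_eq (ht : 0 < t) :
    π ^ 3 * thetaMoment 3 t = 15 / 8 * thetaMomentDual (-7) 0 t
      - 45 / 4 * π * thetaMomentDual (-9) 1 t + 15 / 2 * π ^ 2 * thetaMomentDual (-11) 2 t
      - π ^ 3 * thetaMomentDual (-13) 3 t := by
  have h := ((hasDerivAt_thetaMoment 2 ht).const_mul (π ^ 2)).unique_of_eqOn isOpen_Ioi
    (fun x hx => thetaMoment_two_eq hx) ht
    ((((hasDerivAt_thetaMomentDual (-5) 0 ht).const_mul (3 / 4)).sub
      ((hasDerivAt_thetaMomentDual (-7) 1 ht).const_mul (3 * π))).add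
      ((hasDerivAt_thetaMomentDual (-9) 2 ht).const_mul (π ^ 2)))
  norm_num at h
  linear_combination -h

lemma hasSum_nat_succ_poly_mul_exp {N : ℕ} (c : Fin (N + 1) → ℝ) (ht : 0 < t) :
    HasSum (fun n : ℕ => (∑ i, c i * ((n : ℝ) + 1) ^ (2 * (i : ℕ))) *
        exp (-π * t * ((n : ℝ) + 1) ^ 2))
      ((∑ i, c i * thetaMoment i t - c 0) / 2) := by
  set F : ℤ → ℝ := fun n => (∑ i, c i * (n : ℝ) ^ (2 * (i : ℕ))) * exp (-π * t * n ^ 2)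
  have hF : HasSum F (∑ i, c i * thetaMoment i t) := by
    simp only [F, Finset.sum_mul]
    refine hasSum_sum fun i _ => ?_
    simpa only [mul_assoc, thetaMoment] using (summable_thetaMoment i ht).hasSum.mul_left (c i)
  have hF0 : F 0 = c 0 := by simp [F, Fin.sum_univ_succ]
  have hdouble : HasSum (fun n : ℕ => 2 * F n) (∑ i, c i * thetaMoment i t + F 0) := by
    convert hF.nat_add_neg using 2 with n
    simp [F, two_mul]
  have := ((hasSum_nat_add_iff' 1).2 hdouble).div_const 2
  rw [sum_range_one, Nat.cast_zero, hF0] at this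
  rw [show (∑ i, c i * thetaMoment i t - c 0) / 2
    = (∑ i, c i * thetaMoment i t + c 0 - 2 * c 0) / 2 by ring]
  exact this.congr_fun fun n => by simp [F]

end ThetaMoment

section Diameter

variable {y : ℝ}

lemma tsum_diameter_tail_eq (hy : 0 < y) :
    ∑' n : ℕ, (((n : ℝ) + 2) ^ 2 - 1) *
        ((1 / 6) * ((n : ℝ) + 2) ^ 4 * y ^ 4 - 2 * ((n : ℝ) + 2) ^ 2 * y ^ 2 + 2) *
        exp (-(((n : ℝ) + 2) ^ 2 * y ^ 2 / 4))
      = ((2 + 2 * y ^ 2) * thetaMoment 1 (y ^ 2 / (4 * π))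
        - (2 * y ^ 2 + y ^ 4 / 6) * thetaMoment 2 (y ^ 2 / (4 * π))
        + y ^ 4 / 6 * thetaMoment 3 (y ^ 2 / (4 * π))
        - 2 * thetaMoment 0 (y ^ 2 / (4 * π))) / 2 + 1 := by
  -- the `n = 1` term vanishes, so the sum over `n ≥ 2` is the sum over `n ≥ 1`
  have h := (hasSum_nat_add_iff' 1).2 (hasSum_nat_succ_poly_mul_exp
    ![-2, 2 + 2 * y ^ 2, -(2 * y ^ 2 + y ^ 4 / 6), y ^ 4 / 6] (t := y ^ 2 / (4 * π))
    (by positivity))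
  simp only [Fin.sum_univ_succ, Fin.sum_univ_zero, Matrix.cons_val_zero, Matrix.cons_val_succ,
    Fin.val_zero, Fin.val_succ, sum_range_one] at h
  refine (h.congr_fun fun n => ?_).tsum_eq.trans (by norm_num; ring)
  have : -π * (y ^ 2 / (4 * π)) * ((n + 1 : ℕ) + 1 : ℝ) ^ 2 = -(((n : ℝ) + 2) ^ 2 * y ^ 2 / 4) := by
    field_simp
    push_cast
    ring
  rw [this]
  push_cast
  ring

lemma tsum_diameter_cdf_eq (hy : 0 < y) :
    ∑' n : ℕ, ((8 / y ^ 3) * (24 * (4 * (π * ((n : ℝ) + 1) / y) ^ 2)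
        - 36 * (4 * (π * ((n : ℝ) + 1) / y) ^ 2) ^ 2 + 8 * (4 * (π * ((n : ℝ) + 1) / y) ^ 2) ^ 3)
        + (16 / y) * (4 * (π * ((n : ℝ) + 1) / y) ^ 2) ^ 2)
        * exp (-(4 * (π * ((n : ℝ) + 1) / y) ^ 2))
      = (768 * π ^ 2 / y ^ 5 * thetaMoment 1 (4 * π / y ^ 2)
        + (256 * π ^ 4 / y ^ 5 - 4608 * π ^ 4 / y ^ 7) * thetaMoment 2 (4 * π / y ^ 2)
        + 4096 * π ^ 6 / y ^ 9 * thetaMoment 3 (4 * π / y ^ 2)) / 2 := by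
  have h := hasSum_nat_succ_poly_mul_exp
    ![0, 768 * π ^ 2 / y ^ 5, 256 * π ^ 4 / y ^ 5 - 4608 * π ^ 4 / y ^ 7, 4096 * π ^ 6 / y ^ 9]
    (t := 4 * π / y ^ 2) (by positivity)
  simp only [Fin.sum_univ_succ, Fin.sum_univ_zero, Matrix.cons_val_zero, Matrix.cons_val_succ,
    Fin.val_zero, Fin.val_succ] at h
  refine (h.congr_fun fun n => ?_).tsum_eq.trans (by ring)
  have : -π * (4 * π / y ^ 2) * ((n : ℝ) + 1) ^ 2 = -(4 * (π * ((n : ℝ) + 1) / y) ^ 2) := by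
    field_simp
  rw [this]
  field_simp
  ring

end Diameter

/-- Jacobi-type identity for the diameter of the Brownian tree: for `y > 0`, with
`aₙ = 4(πn/y)²`,
`Σ_{n≥2} (n²-1)((1/6)n⁴y⁴ - 2n²y² + 2) e^{-n²y²/4}
 + (√π/3) Σ_{n≥1} ((8/y³)(24aₙ - 36aₙ² + 8aₙ³) + (16/y)aₙ²) e^{-aₙ} = 1`. -/
theorem diameter_tail_plus_cdf_eq_one (y : ℝ) (hy : 0 < y) :
    let a : ℕ → ℝ := fun n => 4 * (Real.pi * ((n : ℝ) + 1) / y) ^ 2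
    (∑' n : ℕ,
        (((n : ℝ) + 2) ^ 2 - 1) *
          ((1 / 6) * ((n : ℝ) + 2) ^ 4 * y ^ 4 - 2 * ((n : ℝ) + 2) ^ 2 * y ^ 2 + 2) *
          Real.exp (-(((n : ℝ) + 2) ^ 2 * y ^ 2 / 4)))
      + (Real.sqrt Real.pi / 3) *
          ∑' n : ℕ,
            ((8 / y ^ 3) * (24 * a n - 36 * (a n) ^ 2 + 8 * (a n) ^ 3)
              + (16 / y) * (a n) ^ 2) * Real.exp (-(a n)) = 1 := by
  intro a
  have ht : 0 < y ^ 2 / (4 * π) := by positivity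
  rw [tsum_diameter_tail_eq hy, tsum_diameter_cdf_eq hy]
  have h0 := thetaMoment_zero_eq ht
  have h1 := thetaMoment_one_eq ht
  have h2 := thetaMoment_two_eq ht
  have h3 := thetaMoment_three_eq ht
  have hsqrt : √(y ^ 2 / (4 * π)) = y / (2 * √π) := by
    rw [sqrt_div' _ (by positivity), sqrt_sq hy.le, sqrt_mul' _ pi_pos.le,
      show (4 : ℝ) = 2 ^ 2 by norm_num, sqrt_sq zero_le_two]
  simp only [thetaMomentDual, hsqrt, inv_div, zpow_neg, zpow_ofNat] at h0 h1 h2 h3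
  set r := √π
  have hr : π = r ^ 2 := (sq_sqrt pi_pos.le).symm
  have hr0 : r ≠ 0 := (sqrt_pos.2 pi_pos).ne'
  rw [hr] at h0 h1 h2 h3 ⊢
  linear_combination (norm := skip) (-1) * h0 + ((1 + y ^ 2) / r ^ 2) * h1
    - ((y ^ 2 + y ^ 4 / 12) / r ^ 4) * h2 + (y ^ 4 / (12 * r ^ 6)) * h3
  field_simp
  ring
end

section
/- For every y > 0, the function F(y) = Σ_{n≥2} (n²−1) ( (1/6) n⁴y⁴ − 2n²y² + 2 ) e^{−n²y²/4} is differentiable on (0,∞) and F′(y) = − (1/12) Σ_{n≥1} ( n⁸y⁵ − n⁶y³(20 + y²) + 20 n⁴ y (3 + y²) − 60 n² y ) e^{−n²y²/4}. -/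
/-!
Each summand is a polynomial in `m = n + 2` and `u` times the Gaussian factor
`exp (-(m²u²/4))`. For `u ∈ (y/2, 2y)` the termwise derivatives are bounded by
`C m⁸ exp (-(m² y²/16))`, a summable majorant, so the series may be differentiated termwise.
The derivative series in the statement starts at `m = 1`, whose term vanishes.
-/

open Real Set

noncomputable def diameterTailPoly (m u : ℝ) : ℝ :=
  (m ^ 2 - 1) * ((1 / 6) * m ^ 4 * u ^ 4 - 2 * m ^ 2 * u ^ 2 + 2)

noncomputable def diameterTailDerivPoly (m u : ℝ) : ℝ :=
  m ^ 8 * u ^ 5 - m ^ 6 * u ^ 3 * (20 + u ^ 2) + 20 * m ^ 4 * u * (3 + u ^ 2) - 60 * m ^ 2 * u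

lemma diameterTailDerivPoly_one (u : ℝ) : diameterTailDerivPoly 1 u = 0 := by
  unfold diameterTailDerivPoly
  ring

lemma hasDerivAt_diameterTailPoly_mul_exp (m u : ℝ) :
    HasDerivAt (fun v => diameterTailPoly m v * exp (-(m ^ 2 * v ^ 2 / 4)))
      (-(1 / 12) * diameterTailDerivPoly m u * exp (-(m ^ 2 * u ^ 2 / 4))) u := by
  have hpoly := ((((hasDerivAt_pow 4 u).const_mul ((1 / 6) * m ^ 4)).sub
    ((hasDerivAt_pow 2 u).const_mul (2 * m ^ 2))).add_const 2).const_mul (m ^ 2 - 1)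
  have hexp := ((((hasDerivAt_pow 2 u).const_mul (m ^ 2)).div_const 4).neg).exp
  refine (hpoly.mul hexp).congr_deriv ?_
  simp only [diameterTailDerivPoly, Pi.sub_apply, Pi.neg_apply]
  push_cast
  ring

lemma abs_diameterTailPoly_le {m : ℝ} (hm : 1 ≤ m) (u : ℝ) :
    |diameterTailPoly m u| ≤ m ^ 6 * ((1 / 6) * u ^ 4 + 2 * u ^ 2 + 2) := by
  have hfirst : |m ^ 2 - 1| ≤ m ^ 2 := by
    rw [abs_le]
    constructor <;> nlinarith
  have hsecond : |(1 / 6) * m ^ 4 * u ^ 4 - 2 * m ^ 2 * u ^ 2 + 2|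
      ≤ m ^ 4 * ((1 / 6) * u ^ 4 + 2 * u ^ 2 + 2) := by
    have hm24 : m ^ 2 ≤ m ^ 4 := pow_le_pow_right₀ hm (by norm_num)
    have hm04 : 1 ≤ m ^ 4 := one_le_pow₀ hm
    rw [abs_le]
    constructor <;> nlinarith [sq_nonneg u, pow_nonneg (sq_nonneg u) 2]
  calc |diameterTailPoly m u|
      = |m ^ 2 - 1| * |(1 / 6) * m ^ 4 * u ^ 4 - 2 * m ^ 2 * u ^ 2 + 2| := abs_mul _ _
    _ ≤ m ^ 2 * (m ^ 4 * ((1 / 6) * u ^ 4 + 2 * u ^ 2 + 2)) := by gcongr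
    _ = _ := by ring

lemma abs_diameterTailDerivPoly_le {m u R : ℝ} (hm : 1 ≤ m) (hu : 0 ≤ u) (huR : u ≤ R) :
    |diameterTailDerivPoly m u|
      ≤ m ^ 8 * (R ^ 5 + R ^ 3 * (20 + R ^ 2) + 20 * R * (3 + R ^ 2) + 60 * R) := by
  have hR : 0 ≤ R := hu.trans huR
  calc |diameterTailDerivPoly m u|
      ≤ m ^ 8 * u ^ 5 + m ^ 6 * u ^ 3 * (20 + u ^ 2) + 20 * m ^ 4 * u * (3 + u ^ 2)
          + 60 * m ^ 2 * u := by
        have : 0 ≤ m ^ 8 * u ^ 5 := by positivity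
        have : 0 ≤ m ^ 6 * u ^ 3 * (20 + u ^ 2) := by positivity
        have : 0 ≤ 20 * m ^ 4 * u * (3 + u ^ 2) := by positivity
        have : 0 ≤ 60 * m ^ 2 * u := by positivity
        rw [diameterTailDerivPoly, abs_le]
        constructor <;> linarith
    _ ≤ m ^ 8 * u ^ 5 + m ^ 8 * u ^ 3 * (20 + u ^ 2) + 20 * m ^ 8 * u * (3 + u ^ 2)
          + 60 * m ^ 8 * u := by gcongr <;> first | exact hm | norm_num
    _ ≤ m ^ 8 * R ^ 5 + m ^ 8 * R ^ 3 * (20 + R ^ 2) + 20 * m ^ 8 * R * (3 + R ^ 2)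
          + 60 * m ^ 8 * R := by gcongr
    _ = _ := by ring

lemma summable_pow_mul_exp_neg_sq_mul (k a : ℕ) {c : ℝ} (hc : 0 < c) :
    Summable fun n : ℕ => ((n : ℝ) + a) ^ k * exp (-(((n : ℝ) + a) ^ 2 * c)) := by
  have h : Summable fun n : ℕ => (n : ℝ) ^ k * exp (-((n : ℝ) ^ 2 * c)) := by
    refine (summable_pow_mul_exp_neg_nat_mul k hc).of_nonneg_of_le (fun n => by positivity)
      fun n => ?_
    have hn : (n : ℝ) ≤ (n : ℝ) ^ 2 := mod_cast Nat.le_self_pow two_ne_zero n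
    gcongr
    nlinarith
  simpa using (summable_nat_add_iff a).mpr h

lemma hasDerivAt_tsum_diameterTail {y : ℝ} (hy : 0 < y) :
    HasDerivAt
      (fun u => ∑' n : ℕ, diameterTailPoly ((n : ℝ) + 2) u * exp (-(((n : ℝ) + 2) ^ 2 * u ^ 2 / 4)))
      (∑' n : ℕ, -(1 / 12) * diameterTailDerivPoly ((n : ℝ) + 2) y *
        exp (-(((n : ℝ) + 2) ^ 2 * y ^ 2 / 4))) y := by
  have hy_mem : y ∈ Ioo (y / 2) (2 * y) := ⟨by linarith, by linarith⟩
  set R := 2 * y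
  set Q := R ^ 5 + R ^ 3 * (20 + R ^ 2) + 20 * R * (3 + R ^ 2) + 60 * R
  have hm (n : ℕ) : (1 : ℝ) ≤ n + 2 := by linarith [(Nat.cast_nonneg n : (0 : ℝ) ≤ n)]
  have hgauss (k : ℕ) {c : ℝ} (hc : 0 < c) :
      Summable fun n : ℕ => ((n : ℝ) + 2) ^ k * exp (-(((n : ℝ) + 2) ^ 2 * c)) := by
    simpa using summable_pow_mul_exp_neg_sq_mul k 2 hc
  have hterm_le (n : ℕ) :
      ‖diameterTailPoly ((n : ℝ) + 2) y * exp (-(((n : ℝ) + 2) ^ 2 * y ^ 2 / 4))‖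
        ≤ (1 / 6 * y ^ 4 + 2 * y ^ 2 + 2) *
          (((n : ℝ) + 2) ^ 6 * exp (-(((n : ℝ) + 2) ^ 2 * (y ^ 2 / 4)))) := by
    rw [norm_mul, Real.norm_of_nonneg (exp_nonneg _), Real.norm_eq_abs, mul_div_assoc]
    calc _ ≤ ((n : ℝ) + 2) ^ 6 * (1 / 6 * y ^ 4 + 2 * y ^ 2 + 2) *
          exp (-(((n : ℝ) + 2) ^ 2 * (y ^ 2 / 4))) := by
          gcongr
          exact abs_diameterTailPoly_le (hm n) y
      _ = _ := by ring
  have hderiv_le (n : ℕ) (u : ℝ) (hu : u ∈ Ioo (y / 2) R) :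
      ‖-(1 / 12) * diameterTailDerivPoly ((n : ℝ) + 2) u * exp (-(((n : ℝ) + 2) ^ 2 * u ^ 2 / 4))‖
        ≤ 1 / 12 * Q * (((n : ℝ) + 2) ^ 8 * exp (-(((n : ℝ) + 2) ^ 2 * (y ^ 2 / 16)))) := by
    have hexp : exp (-(((n : ℝ) + 2) ^ 2 * u ^ 2 / 4))
        ≤ exp (-(((n : ℝ) + 2) ^ 2 * (y ^ 2 / 16))) := by
      have : (y / 2) ^ 2 ≤ u ^ 2 := pow_le_pow_left₀ (by positivity) hu.1.le 2
      rw [exp_le_exp, neg_le_neg_iff, mul_div_assoc]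
      exact mul_le_mul_of_nonneg_left (by linarith) (by positivity)
    rw [norm_mul, norm_mul, norm_neg, Real.norm_of_nonneg (exp_nonneg _),
      Real.norm_of_nonneg (by norm_num : (0 : ℝ) ≤ 1 / 12), Real.norm_eq_abs]
    calc _ ≤ 1 / 12 * (((n : ℝ) + 2) ^ 8 * Q) * exp (-(((n : ℝ) + 2) ^ 2 * (y ^ 2 / 16))) := by
          gcongr
          exact abs_diameterTailDerivPoly_le (hm n) (by linarith [hu.1]) hu.2.le
      _ = _ := by ring
  exact hasDerivAt_tsum_of_isPreconnected ((hgauss 8 (by positivity)).mul_left _)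
    isOpen_Ioo isPreconnected_Ioo (fun n u _ => hasDerivAt_diameterTailPoly_mul_exp _ u)
    hderiv_le hy_mem (.of_norm_bounded ((hgauss 6 (by positivity)).mul_left _) hterm_le) hy_mem

/-- The tail series `F(y) = Σ_{n≥2} (n²-1)((1/6)n⁴y⁴ - 2n²y² + 2) e^{-n²y²/4}` of the
diameter of the Brownian tree is differentiable on `(0,∞)` with derivative
`F'(y) = -(1/12) Σ_{n≥1} (n⁸y⁵ - n⁶y³(20 + y²) + 20n⁴y(3 + y²) - 60n²y) e^{-n²y²/4}`. -/
theorem diameter_tail_hasDerivAt (y : ℝ) (hy : 0 < y) :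
    HasDerivAt
      (fun u : ℝ => ∑' n : ℕ,
        (((n : ℝ) + 2) ^ 2 - 1) *
          ((1 / 6) * ((n : ℝ) + 2) ^ 4 * u ^ 4 - 2 * ((n : ℝ) + 2) ^ 2 * u ^ 2 + 2) *
          Real.exp (-(((n : ℝ) + 2) ^ 2 * u ^ 2 / 4)))
      (-(1 / 12) * ∑' n : ℕ,
        (((n : ℝ) + 1) ^ 8 * y ^ 5 - ((n : ℝ) + 1) ^ 6 * y ^ 3 * (20 + y ^ 2)
          + 20 * ((n : ℝ) + 1) ^ 4 * y * (3 + y ^ 2) - 60 * ((n : ℝ) + 1) ^ 2 * y) *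
          Real.exp (-(((n : ℝ) + 1) ^ 2 * y ^ 2 / 4)))
      y := by
  set A : ℕ → ℝ := fun n =>
    diameterTailDerivPoly ((n : ℝ) + 1) y * exp (-(((n : ℝ) + 1) ^ 2 * y ^ 2 / 4))
  have hA_zero : A 0 = 0 := by simp [A, diameterTailDerivPoly_one]
  have hshift : ∑' n, A (n + 1) = ∑' n, A n :=
    Nat.succ_injective.tsum_eq fun n hn =>
      ⟨n.pred, Nat.succ_pred_eq_of_ne_zero (by rintro rfl; exact hn hA_zero)⟩
  refine (hasDerivAt_tsum_diameterTail hy).congr_deriv ?_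
  change _ = -(1 / 12) * ∑' n, A n
  rw [← hshift, ← tsum_mul_left]
  refine tsum_congr fun n => ?_
  simp only [A]
  push_cast
  ring_nf
end
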